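/- arXiv:1204.3180 — 12 statements merged into one kernel-verified Lean document; each statement's English description precedes it below -/
import Mathlib

section
/- Let d ≥ 2 and n ≥ 1 be integers and let a, b, u, v be d-ary strings of length n. Let J = { j ∈ {1,…,n} : b_i = v_i for all 1 ≤ i ≤ j−1 and a_i = u_i for all j ≤ i ≤ n−1 }. Then J has exactly one element if and only if suf(a_{1..n−1}, u_{1..n−1}) + pre(b_{1..n−1}, v_{1..n−1}) = n−1, and in that case the unique element of J is pre(b_{1..n−1}, v_{1..n−1}) + 1. -/
/-- Length of the longest common prefix of the `(n-1)`-prefixes `s₁⋯s_{n-1}` and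
`s'₁⋯s'_{n-1}` of two `d`-ary strings of length `n`: the largest `p ≤ n-1` such
that `s i = s' i` for all (0-indexed) `i < p`. -/
def strPre (d n : ℕ) (s s' : Fin n → Fin d) : ℕ :=
  ((Finset.range n).filter (fun p => ∀ i : Fin n, (i : ℕ) < p → s i = s' i)).sup id

/-- Length of the longest common suffix of the `(n-1)`-prefixes `s₁⋯s_{n-1}` and
`s'₁⋯s'_{n-1}` of two `d`-ary strings of length `n`: the largest `q ≤ n-1` such
that `s i = s' i` for all (0-indexed) `i` with `n-1-q ≤ i < n-1`. -/
def strSuf (d n : ℕ) (s s' : Fin n → Fin d) : ℕ :=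
  ((Finset.range n).filter
    (fun q => ∀ i : Fin n, n - 1 - q ≤ (i : ℕ) → (i : ℕ) < n - 1 → s i = s' i)).sup id

/-- Proposition 1 (second part): `J` (the set of stages at which the routes
`R(a,b)` and `R(u,v)` meet) has exactly one element iff
`suf(a_{1..n-1},u_{1..n-1}) + pre(b_{1..n-1},v_{1..n-1}) = n-1`, in which case
its unique element is `pre(b_{1..n-1},v_{1..n-1}) + 1`. -/
theorem stmt_1 (d n : ℕ) (hd : 2 ≤ d) (hn : 1 ≤ n) (a b u v : Fin n → Fin d)
    (J : Finset ℕ)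
    (hJ : J = (Finset.Icc 1 n).filter (fun j =>
      (∀ i : Fin n, (i : ℕ) + 1 < j → b i = v i) ∧
      (∀ i : Fin n, j ≤ (i : ℕ) + 1 → (i : ℕ) < n - 1 → a i = u i))) :
    (J.card = 1 ↔ strSuf d n a u + strPre d n b v = n - 1) ∧
    (strSuf d n a u + strPre d n b v = n - 1 → J = {strPre d n b v + 1}) := by
  set P := strPre d n b v with hPdef
  set Q := strSuf d n a u with hQdef
  -- properties of P
  have hPmem : P ∈ (Finset.range n).filter
      (fun p => ∀ i : Fin n, (i : ℕ) < p → b i = v i) := by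
    obtain ⟨c, hc, hceq⟩ := Finset.exists_mem_eq_sup
      ((Finset.range n).filter (fun p => ∀ i : Fin n, (i : ℕ) < p → b i = v i))
      ⟨0, Finset.mem_filter.mpr ⟨Finset.mem_range.mpr hn,
        fun i h => absurd h (Nat.not_lt_zero _)⟩⟩ id
    rw [hPdef, strPre, hceq]; exact hc
  obtain ⟨hPlt, hPagree⟩ := Finset.mem_filter.mp hPmem
  rw [Finset.mem_range] at hPlt
  have hPmax : ∀ m, m < n → (∀ i : Fin n, (i : ℕ) < m → b i = v i) → m ≤ P :=
    fun m hm h => Finset.le_sup (f := id)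
      (Finset.mem_filter.mpr ⟨Finset.mem_range.mpr hm, h⟩)
  -- properties of Q
  have hQmem : Q ∈ (Finset.range n).filter
      (fun q => ∀ i : Fin n, n - 1 - q ≤ (i : ℕ) → (i : ℕ) < n - 1 → a i = u i) := by
    obtain ⟨c, hc, hceq⟩ := Finset.exists_mem_eq_sup
      ((Finset.range n).filter
        (fun q => ∀ i : Fin n, n - 1 - q ≤ (i : ℕ) → (i : ℕ) < n - 1 → a i = u i))
      ⟨0, Finset.mem_filter.mpr ⟨Finset.mem_range.mpr (by omega),
        fun i h1 h2 => absurd h2 (by omega)⟩⟩ id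
    rw [hQdef, strSuf, hceq]; exact hc
  obtain ⟨hQlt, hQagree⟩ := Finset.mem_filter.mp hQmem
  rw [Finset.mem_range] at hQlt
  have hQmax : ∀ m, m < n →
      (∀ i : Fin n, n - 1 - m ≤ (i : ℕ) → (i : ℕ) < n - 1 → a i = u i) → m ≤ Q :=
    fun m hm h => Finset.le_sup (f := id)
      (Finset.mem_filter.mpr ⟨Finset.mem_range.mpr hm, h⟩)
  -- membership characterization of J
  have hJmem : ∀ j, j ∈ J ↔ (n - Q ≤ j ∧ j ≤ P + 1) := by
    intro j
    rw [hJ, Finset.mem_filter, Finset.mem_Icc]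
    constructor
    · rintro ⟨⟨h1, h2⟩, hb, ha⟩
      constructor
      · have : n - j ≤ Q := hQmax (n - j) (by omega)
          (fun i hi1 hi2 => ha i (by omega) hi2)
        omega
      · have : j - 1 ≤ P := hPmax (j - 1) (by omega)
          (fun i hi => hb i (by omega))
        omega
    · rintro ⟨h1, h2⟩
      exact ⟨⟨by omega, by omega⟩,
        fun i hi => hPagree i (by omega),
        fun i hi1 hi2 => hQagree i (by omega) hi2⟩
  have hJI : J = Finset.Icc (n - Q) (P + 1) := by
    ext j; rw [hJmem, Finset.mem_Icc]
  constructor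
  · rw [hJI, Nat.card_Icc]; omega
  · intro h
    ext j
    rw [hJmem, Finset.mem_singleton]
    omega
end

section
/- Let d ≥ 2 and n ≥ 1 be integers and let a, b, u, v be d-ary strings of length n. Then there exists an index j with 1 ≤ j ≤ n−1 such that b_i = v_i for all 1 ≤ i ≤ j and a_i = u_i for all j ≤ i ≤ n−1, if and only if suf(a_{1..n−1}, u_{1..n−1}) + pre(b_{1..n−1}, v_{1..n−1}) ≥ n. -/
/-- Proposition 2: the routes `R(a,b)` and `R(u,v)` in one `BY⁻¹(n)`-plane
share at least one internal link iff
`suf(a_{1..n-1}, u_{1..n-1}) + pre(b_{1..n-1}, v_{1..n-1}) ≥ n`.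
Indices are 1-indexed via `(i : ℕ) + 1`. -/
theorem stmt_2 (d n : ℕ) (hd : 2 ≤ d) (hn : 1 ≤ n) (a b u v : Fin n → Fin d) :
    (∃ j : ℕ, 1 ≤ j ∧ j ≤ n - 1 ∧
      (∀ i : Fin n, (i : ℕ) + 1 ≤ j → b i = v i) ∧
      (∀ i : Fin n, j ≤ (i : ℕ) + 1 → (i : ℕ) < n - 1 → a i = u i)) ↔
    n ≤ strSuf d n a u + strPre d n b v := by
  constructor
  · rintro ⟨j, hj1, hj2, hb, ha⟩
    have hjn : j < n := lt_of_le_of_lt hj2 (Nat.sub_lt hn one_pos)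
    have hP : j ≤ strPre d n b v := by
      apply Finset.le_sup (f := id)
      simp only [Finset.mem_filter, Finset.mem_range]
      exact ⟨hjn, fun i hi => hb i hi⟩
    have hS : n - j ≤ strSuf d n a u := by
      apply Finset.le_sup (f := id)
      simp only [Finset.mem_filter, Finset.mem_range]
      refine ⟨Nat.sub_lt hn hj1, fun i hi hi2 => ?_⟩
      apply ha i _ hi2
      omega
    omega
  · intro h
    have hPmem : ∃ p ∈ (Finset.range n).filter
        (fun p => ∀ i : Fin n, (i : ℕ) < p → b i = v i), strPre d n b v = id p := by
      apply Finset.exists_mem_eq_sup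
      refine ⟨0, ?_⟩
      simp only [Finset.mem_filter, Finset.mem_range]
      exact ⟨hn, fun i hi => absurd hi (by omega)⟩
    have hSmem : ∃ q ∈ (Finset.range n).filter
        (fun q => ∀ i : Fin n, n - 1 - q ≤ (i : ℕ) → (i : ℕ) < n - 1 → a i = u i),
        strSuf d n a u = id q := by
      apply Finset.exists_mem_eq_sup
      refine ⟨0, ?_⟩
      simp only [Finset.mem_filter, Finset.mem_range]
      exact ⟨hn, fun i h1 h2 => absurd h2 (by omega)⟩
    obtain ⟨p, hp, hpe⟩ := hPmem
    obtain ⟨q, hq, hqe⟩ := hSmem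
    simp only [Finset.mem_filter, Finset.mem_range, id] at hp hq
    obtain ⟨hpn, hpprop⟩ := hp
    obtain ⟨hqn, hqprop⟩ := hq
    rw [hpe, hqe] at h
    simp only [id] at h
    refine ⟨max 1 (n - q), le_max_left _ _, by omega, ?_, ?_⟩
    · intro i hi
      apply hpprop
      omega
    · intro i hi hi2
      apply hqprop i _ hi2
      omega
end

section
/- Let d ≥ 2 and n ≥ 1 be integers and let t be an integer with 1 ≤ t ≤ n−1. Let B be a nonempty finite set of d-ary strings of length n that pairwise agree in their first n−t coordinates. For an integer j with 0 ≤ j ≤ n−t−1, the number of d-ary strings v of length n with v ∉ B such that pre(v_{1..n−1}, b_{1..n−1}) = j for some b ∈ B equals d^{n−j} − d^{n−1−j}. -/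
/-!
All members of `B` share their first `n - t ≥ j + 1` letters with a fixed `b₀ ∈ B`, so `B_j`
consists exactly of the strings that agree with `b₀` before position `j` and differ from it at
position `j`: one choice for each of the first `j` letters, `d - 1` for the next one and `d` for
each of the remaining `n - 1 - j`, giving `(d - 1) d^(n-1-j) = d^(n-j) - d^(n-1-j)`.
-/

open Finset

theorem prod_range_ite_lt_ite_eq {M : Type*} [CommMonoid M] (a b : M) {j n : ℕ} (hj : j < n) :
    ∏ i ∈ range n, (if i < j then 1 else if i = j then a else b) = a * b ^ (n - 1 - j) := by
  induction n, hj using Nat.le_induction with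
  | base =>
    rw [prod_range_succ, prod_eq_one fun i hi => if_pos (mem_range.1 hi)]
    simp
  | succ m hm ih =>
    rw [prod_range_succ, ih, if_neg (by omega), if_neg (by omega),
      show m + 1 - 1 - j = m - 1 - j + 1 by omega, pow_succ, mul_assoc]

section StrPre

variable {d n j : ℕ}

theorem le_strPre_iff {p : ℕ} (hp : p < n) (s s' : Fin n → Fin d) :
    p ≤ strPre d n s s' ↔ ∀ i : Fin n, (i : ℕ) < p → s i = s' i := by
  constructor
  · intro hle i hi
    have hne : ((range n).filter (fun q => ∀ i : Fin n, (i : ℕ) < q → s i = s' i)).Nonempty :=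
      ⟨0, mem_filter.2 ⟨mem_range.2 (by omega), by simp⟩⟩
    obtain ⟨q, hq, hsup⟩ := exists_mem_eq_sup _ hne id
    rw [strPre, hsup] at hle
    exact (mem_filter.1 hq).2 i (by simp only [id] at hle; omega)
  · intro h
    exact le_sup (f := id) (mem_filter.2 ⟨mem_range.2 hp, h⟩)

theorem strPre_eq_iff (hj : j + 1 < n) (s s' : Fin n → Fin d) :
    strPre d n s s' = j ↔
      (∀ i : Fin n, (i : ℕ) < j → s i = s' i) ∧ s ⟨j, by omega⟩ ≠ s' ⟨j, by omega⟩ := by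
  have hsucc : (∀ i : Fin n, (i : ℕ) < j + 1 → s i = s' i) ↔
      (∀ i : Fin n, (i : ℕ) < j → s i = s' i) ∧ s ⟨j, by omega⟩ = s' ⟨j, by omega⟩ := by
    refine ⟨fun h => ⟨fun i hi => h i (by omega), h _ (by simp)⟩, fun ⟨h, heq⟩ i hi => ?_⟩
    rcases Nat.lt_succ_iff_lt_or_eq.1 hi with hi | hi
    · exact h i hi
    · rwa [show i = ⟨j, by omega⟩ from Fin.ext hi]
  rw [show strPre d n s s' = j ↔ j ≤ strPre d n s s' ∧ ¬j + 1 ≤ strPre d n s s' by omega,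
    le_strPre_iff (by omega), le_strPre_iff hj, hsucc]
  tauto

theorem strPre_eq_congr_right (hj : j + 1 < n) {b b' : Fin n → Fin d}
    (h : ∀ i : Fin n, (i : ℕ) ≤ j → b i = b' i) (v : Fin n → Fin d) :
    strPre d n v b = j ↔ strPre d n v b' = j := by
  rw [strPre_eq_iff hj, strPre_eq_iff hj, h _ le_rfl]
  exact and_congr_left' (forall_congr' fun i => imp_congr_right fun hi => by rw [h i hi.le])

/-- A string whose common prefix with `b₀` has length exactly `j` differs from `b₀` at position
`j`, so the condition `v ∉ B` is automatic. -/
theorem filter_notMem_and_exists_strPre_eq (hj : j + 1 < n) {B : Finset (Fin n → Fin d)}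
    {b₀ : Fin n → Fin d} (hb₀ : b₀ ∈ B) (hB : ∀ b ∈ B, ∀ i : Fin n, (i : ℕ) ≤ j → b i = b₀ i) :
    univ.filter (fun v => v ∉ B ∧ ∃ b ∈ B, strPre d n v b = j) =
      univ.filter (fun v => strPre d n v b₀ = j) := by
  ext v
  simp only [mem_filter, mem_univ, true_and]
  constructor
  · rintro ⟨-, b, hb, hvb⟩
    exact (strPre_eq_congr_right hj (hB b hb) v).1 hvb
  · intro hv
    refine ⟨fun hvB => ((strPre_eq_iff hj v b₀).1 hv).2 (hB v hvB _ le_rfl), b₀, hb₀, hv⟩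

theorem card_filter_strPre_eq (hj : j + 1 < n) (b : Fin n → Fin d) :
    #(univ.filter (fun v => strPre d n v b = j)) = (d - 1) * d ^ (n - 1 - j) := by
  let A : Fin n → Finset (Fin d) := fun i =>
    if (i : ℕ) < j then {b i} else if (i : ℕ) = j then {b i}ᶜ else univ
  have hA : univ.filter (fun v => strPre d n v b = j) = Fintype.piFinset A := by
    ext v
    simp only [mem_filter, mem_univ, true_and, Fintype.mem_piFinset, strPre_eq_iff hj]
    constructor
    · rintro ⟨hlt, hne⟩ i
      simp only [A]
      split_ifs with hi hi'
      · exact mem_singleton.2 (hlt i hi)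
      · rwa [mem_compl, mem_singleton, show i = ⟨j, by omega⟩ from Fin.ext hi']
      · exact mem_univ _
    · intro h
      exact ⟨fun i hi => by simpa [A, hi] using h i, by simpa [A] using h ⟨j, by omega⟩⟩
  have hcard (i : Fin n) :
      #(A i) = if (i : ℕ) < j then 1 else if (i : ℕ) = j then d - 1 else d := by
    simp only [A]
    split_ifs <;> simp [card_compl]
  rw [hA, Fintype.card_piFinset, prod_congr rfl (fun i _ => hcard i),
    Fin.prod_univ_eq_prod_range (fun i => if i < j then 1 else if i = j then d - 1 else d)]
  exact prod_range_ite_lt_ite_eq _ _ (by omega)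

end StrPre

theorem stmt_4_general (d n t : ℕ) (ht1 : 1 ≤ t) (ht2 : t ≤ n - 1)
    (B : Finset (Fin n → Fin d)) (hBne : B.Nonempty)
    (hB : ∀ b ∈ B, ∀ b' ∈ B, ∀ i : Fin n, (i : ℕ) < n - t → b i = b' i)
    (j : ℕ) (hj : j ≤ n - t - 1) :
    (Finset.univ.filter (fun v : Fin n → Fin d =>
        v ∉ B ∧ ∃ b ∈ B, strPre d n v b = j)).card
      = d ^ (n - j) - d ^ (n - 1 - j) := by
  obtain ⟨b₀, hb₀⟩ := hBne
  have hjn : j + 1 < n := by omega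
  rw [filter_notMem_and_exists_strPre_eq hjn hb₀ fun b hb i hi => hB b hb b₀ hb₀ i (by omega),
    card_filter_strPre_eq hjn, show n - j = n - 1 - j + 1 by omega, pow_succ', ← Nat.sub_one_mul]

/-- `|B_j| = d^{n-j} - d^{n-1-j}` for `0 ≤ j ≤ n-t-1`, where `B` is a nonempty
set of outputs lying in one window (all agreeing in the first `n-t`
coordinates) and `B_j` is the set of outputs `v ∉ B` whose `(n-1)`-prefix
shares a prefix of length exactly `j` with that of some member of `B`. -/
theorem stmt_4 (d n t : ℕ) (hd : 2 ≤ d) (hn : 1 ≤ n) (ht1 : 1 ≤ t) (ht2 : t ≤ n - 1)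
    (B : Finset (Fin n → Fin d)) (hBne : B.Nonempty)
    (hB : ∀ b ∈ B, ∀ b' ∈ B, ∀ i : Fin n, (i : ℕ) < n - t → b i = b' i)
    (j : ℕ) (hj : j ≤ n - t - 1) :
    (Finset.univ.filter (fun v : Fin n → Fin d =>
        v ∉ B ∧ ∃ b ∈ B, strPre d n v b = j)).card
      = d ^ (n - j) - d ^ (n - 1 - j) :=
  stmt_4_general d n t ht1 ht2 B hBne hB j hj
end

section
/- Let d ≥ 2 and n ≥ 1 be integers, let t be an integer with 1 ≤ t ≤ n, and let B be a set of k ≥ 1 distinct d-ary strings of length n that pairwise agree in their first n−t coordinates. For every integer q with n−t ≤ q ≤ n−1, the number of d-ary strings v of length n with v ∉ B such that pre(v_{1..n−1}, b_{1..n−1}) ≥ q for some b ∈ B is at most min{ d^t − k, k·(d^{n−q} − 1) }. -/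
lemma aux_card (n m : ℕ) : (Finset.univ.filter fun i : Fin n => m ≤ (i:ℕ)).card = n - m := by
  have : (Finset.univ.filter fun i : Fin n => m ≤ (i:ℕ)).card
      = ((Finset.range n).filter fun i => m ≤ i).card := by
    refine Finset.card_nbij (fun i => (i:ℕ)) ?_ ?_ ?_
    · intro a ha; simp_all [Fin.is_lt]
    · intro a _ b _ hab; exact Fin.val_injective hab
    · intro a ha; simp only [Finset.coe_filter, Set.mem_setOf_eq, Finset.mem_range] at ha
      exact ⟨⟨a, ha.1⟩, by simp [ha.2], rfl⟩
  rw [this, Finset.range_eq_Ico, Finset.Ico_filter_le, Nat.card_Ico]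
  omega

lemma card_agree (d n m : ℕ) (b : Fin n → Fin d) :
    (Finset.univ.filter (fun v : Fin n → Fin d => ∀ i : Fin n, (i:ℕ) < m → v i = b i)).card
      = d ^ (n - m) := by
  have e : {v : Fin n → Fin d // ∀ i : Fin n, (i:ℕ) < m → v i = b i} ≃
      ({i : Fin n // m ≤ (i:ℕ)} → Fin d) :=
    { toFun := fun v j => v.1 j.1
      invFun := fun g => ⟨fun i => if h : m ≤ (i:ℕ) then g ⟨i, h⟩ else b i, by
        intro i hi
        simp [Nat.not_le.mpr hi]⟩
      left_inv := by
        intro v; ext i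
        by_cases h : m ≤ (i:ℕ)
        · simp [h]
        · simp [h, v.2 i (Nat.not_le.mp h)]
      right_inv := by
        intro g; ext j; simp [j.2] }
  rw [← Fintype.card_subtype, Fintype.card_congr e, Fintype.card_fun,
    Fintype.card_fin, Fintype.card_subtype, aux_card]

lemma pre_agree {d n q : ℕ} {v b : Fin n → Fin d} (h : q ≤ strPre d n v b) :
    ∀ i : Fin n, (i:ℕ) < q → v i = b i := by
  intro i hi
  rcases Nat.eq_zero_or_pos q with hq | hq
  · omega
  · unfold strPre at h
    rw [Finset.le_sup_iff hq] at h
    obtain ⟨p, hp, hqp⟩ := h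
    simp only [Finset.mem_filter] at hp
    exact hp.2 i (lt_of_lt_of_le hi hqp)

/-- Proposition 3 (first part): `|⋃_{j=q}^{n-1} B_j| ≤ min{d^t - k, k(d^{n-q}-1)}`
for `n-t ≤ q ≤ n-1`, where `B` is a set of `k ≥ 1` outputs lying in one window
of size `d^t` (all agreeing in the first `n-t` coordinates). -/
theorem stmt_5 (d n t k : ℕ) (hd : 2 ≤ d) (hn : 1 ≤ n) (ht1 : 1 ≤ t) (ht2 : t ≤ n)
    (B : Finset (Fin n → Fin d)) (hk : B.card = k) (hk1 : 1 ≤ k)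
    (hB : ∀ b ∈ B, ∀ b' ∈ B, ∀ i : Fin n, (i : ℕ) < n - t → b i = b' i)
    (q : ℕ) (hq1 : n - t ≤ q) (hq2 : q ≤ n - 1) :
    (Finset.univ.filter (fun v : Fin n → Fin d =>
        v ∉ B ∧ ∃ b ∈ B, q ≤ strPre d n v b)).card
      ≤ min (d ^ t - k) (k * (d ^ (n - q) - 1)) := by
  obtain ⟨b₀, hb₀⟩ := Finset.card_pos.mp (by omega : 0 < B.card)
  set S := Finset.univ.filter (fun v : Fin n → Fin d =>
        v ∉ B ∧ ∃ b ∈ B, q ≤ strPre d n v b) with hS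
  refine le_min ?_ ?_
  · set W := Finset.univ.filter
      (fun v : Fin n → Fin d => ∀ i : Fin n, (i:ℕ) < n - t → v i = b₀ i) with hWdef
    have hW : W.card = d ^ t := by
      rw [hWdef, card_agree]; congr 1; omega
    have hBW : B ⊆ W := by
      intro b hb
      simp only [hWdef, Finset.mem_filter, Finset.mem_univ, true_and]
      exact fun i hi => hB b hb b₀ hb₀ i hi
    have hSW : S ⊆ W \ B := by
      intro v hv
      simp only [hS, Finset.mem_filter, Finset.mem_univ, true_and] at hv
      obtain ⟨hvB, b, hb, hpre⟩ := hv
      rw [Finset.mem_sdiff]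
      refine ⟨?_, hvB⟩
      simp only [hWdef, Finset.mem_filter, Finset.mem_univ, true_and]
      intro i hi
      rw [pre_agree hpre i (lt_of_lt_of_le hi hq1)]
      exact hB b hb b₀ hb₀ i hi
    calc S.card ≤ (W \ B).card := Finset.card_le_card hSW
      _ = W.card - B.card := Finset.card_sdiff_of_subset hBW
      _ = d ^ t - k := by rw [hW, hk]
  · have hsub : S ⊆ B.biUnion (fun b =>
        (Finset.univ.filter (fun v : Fin n → Fin d =>
          ∀ i : Fin n, (i:ℕ) < q → v i = b i)) \ {b}) := by
      intro v hv
      simp only [hS, Finset.mem_filter, Finset.mem_univ, true_and] at hv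
      obtain ⟨hvB, b, hb, hpre⟩ := hv
      simp only [Finset.mem_biUnion]
      refine ⟨b, hb, ?_⟩
      rw [Finset.mem_sdiff]
      constructor
      · simp only [Finset.mem_filter, Finset.mem_univ, true_and]
        exact pre_agree hpre
      · simp only [Finset.mem_singleton]
        rintro rfl; exact hvB hb
    calc S.card ≤ _ := Finset.card_le_card hsub
      _ ≤ ∑ b ∈ B, ((Finset.univ.filter (fun v : Fin n → Fin d =>
          ∀ i : Fin n, (i:ℕ) < q → v i = b i)) \ {b}).card := Finset.card_biUnion_le
      _ ≤ ∑ _b ∈ B, (d ^ (n - q) - 1) := by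
          refine Finset.sum_le_sum fun b _ => ?_
          rw [Finset.card_sdiff_of_subset (by simp), Finset.card_singleton, card_agree]
      _ = k * (d ^ (n - q) - 1) := by
          rw [Finset.sum_const, hk, smul_eq_mul]
end

section
/- Let d ≥ 2 and n ≥ 1 be integers. For a positive integer k, set x(k) = ⌊log_d k⌋ and h(k) = d^{⌊(n+x(k))/2⌋} + k·( d^{n−⌊(n+x(k))/2⌋−1} − 1 ). Then for every integer k ≥ 2 with ⌊log_d k⌋ ≤ n−1, one has h(k−1) ≤ h(k); in other words, h is non-decreasing on the range of k with ⌊log_d k⌋ ≤ n−1. -/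
/-!
Passing from `k - 1` to `k` changes `x = ⌊log_d k⌋` only when `k = d ^ x`; otherwise `h` is
visibly nondecreasing in `k`. At `k = d ^ x` the exponent `⌊(n + x) / 2⌋` moves only when `n + x`
is even, and then, writing `A = d ^ x` and `B = d ^ (n - ⌊(n + x) / 2⌋ - 1)`, one has
`d ^ ⌊(n + x - 1) / 2⌋ = A * B`, so that `h k - h (k - 1) = B * d - 1 ≥ 0`.
-/

lemma Nat.log_pow_sub_one {b : ℕ} (hb : 1 < b) (x : ℕ) : Nat.log b (b ^ x - 1) = x - 1 := by
  rcases x with _ | x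
  · simp
  · have := Nat.pow_lt_pow_right hb (Nat.lt_add_one x)
    refine Nat.log_eq_of_pow_le_of_lt_pow ?_ ?_ <;> simp only [Nat.add_sub_cancel] <;> omega

lemma Nat.pow_log_eq_self_of_log_sub_one_lt {b k : ℕ} (hb : 1 < b)
    (h : Nat.log b (k - 1) < Nat.log b k) : b ^ Nat.log b k = k := by
  have hk : k ≠ 0 := by rintro rfl; simp at h
  have := Nat.lt_pow_of_log_lt hb h
  have := Nat.pow_log_le_self b hk
  omega

lemma mul_add_sub_one_mul_le {A B d : ℕ} (hd : 1 ≤ d) :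
    A * B + (A - 1) * (B * d - 1) ≤ A * B * d + A * (B - 1) := by
  rcases Nat.eq_zero_or_pos A with rfl | hA
  · simp
  rcases Nat.eq_zero_or_pos B with rfl | hB
  · simp
  have hBd : 1 ≤ B * d := Nat.one_le_iff_ne_zero.2 (by positivity)
  zify [hA, hB, hBd]
  nlinarith

namespace Multilog

def h (d n k : ℕ) : ℕ :=
  d ^ ((n + Nat.log d k) / 2) + k * (d ^ (n - (n + Nat.log d k) / 2 - 1) - 1)

lemma h_le_h_of_log_eq {d n j k : ℕ} (hjk : j ≤ k) (hlog : Nat.log d j = Nat.log d k) :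
    h d n j ≤ h d n k := by
  unfold h
  rw [hlog]
  gcongr

lemma h_pow_sub_one_le {d n x : ℕ} (hd : 1 < d) (hx : 0 < x) (hxn : x < n) :
    h d n (d ^ x - 1) ≤ h d n (d ^ x) := by
  unfold h
  rw [Nat.log_pow_sub_one hd, Nat.log_pow hd]
  rcases Nat.even_or_odd (n + x) with ⟨m, hm⟩ | ⟨m, hm⟩
  · obtain ⟨b, rfl⟩ : ∃ b, m = x + b + 1 := ⟨m - x - 1, by omega⟩
    rw [show (n + (x - 1)) / 2 = x + b by omega, show n - (x + b) - 1 = b + 1 by omega,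
      show (n + x) / 2 = x + b + 1 by omega, show n - (x + b + 1) - 1 = b by omega,
      pow_succ, pow_succ, pow_add]
    exact mul_add_sub_one_mul_le (by omega)
  · rw [show (n + (x - 1)) / 2 = (n + x) / 2 by omega]
    gcongr
    omega

end Multilog

theorem stmt_7_general (d n : ℕ) (hd : 2 ≤ d) (k : ℕ)
    (hlog : Nat.log d k ≤ n - 1) :
    d ^ ((n + Nat.log d (k - 1)) / 2)
        + (k - 1) * (d ^ (n - (n + Nat.log d (k - 1)) / 2 - 1) - 1)
      ≤ d ^ ((n + Nat.log d k) / 2)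
        + k * (d ^ (n - (n + Nat.log d k) / 2 - 1) - 1) := by
  show Multilog.h d n (k - 1) ≤ Multilog.h d n k
  rcases (Nat.log_mono_right (b := d) (Nat.sub_le k 1)).eq_or_lt with heq | hlt
  · exact Multilog.h_le_h_of_log_eq (Nat.sub_le k 1) heq
  · have hpow := Nat.pow_log_eq_self_of_log_sub_one_lt hd hlt
    have hstep := Multilog.h_pow_sub_one_le (n := n) hd (by omega) (by omega : Nat.log d k < n)
    rwa [hpow] at hstep

/-- Lemma 2 of the paper: with `x(k) = ⌊log_d k⌋`, the function
`h(k) = d^{⌊(n+x(k))/2⌋} + k (d^{n-⌊(n+x(k))/2⌋-1} - 1)` satisfies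
`h(k-1) ≤ h(k)` for every `k ≥ 2` with `⌊log_d k⌋ ≤ n-1`. -/
theorem stmt_7 (d n : ℕ) (hd : 2 ≤ d) (hn : 1 ≤ n) (k : ℕ) (hk : 2 ≤ k)
    (hlog : Nat.log d k ≤ n - 1) :
    d ^ ((n + Nat.log d (k - 1)) / 2)
        + (k - 1) * (d ^ (n - (n + Nat.log d (k - 1)) / 2 - 1) - 1)
      ≤ d ^ ((n + Nat.log d k) / 2)
        + k * (d ^ (n - (n + Nat.log d k) / 2 - 1) - 1) :=
  stmt_7_general d n hd k hlog
end

section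
/- Let d ≥ 2 and n ≥ 1 be integers. For a positive integer k, set x(k) = ⌊log_d k⌋ and h̄(k) = d^{⌊(x(k)+n+1)/2⌋} + k·( d^{n−⌊(x(k)+n+1)/2⌋} − 1 ). Then for every integer k ≥ 2 with ⌊log_d k⌋ ≤ n, one has h̄(k−1) ≤ h̄(k); in other words, h̄ is non-decreasing on the range of k with ⌊log_d k⌋ ≤ n. -/
/-!
Here `h̄(k) = hbar d n (log d k) k`, and `hbar d n x` is affine in `k` with nonnegative slope
`d ^ (n - e) - 1`, where `e = ⌊(x + n + 1) / 2⌋`. So `h̄` can only decrease where `log d k` jumps,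
from `x` to `x + 1` at `k = d ^ (x + 1)`. There `e` either stays put, or (when `x + n` is even)
grows by one; in the latter case the two sides differ by exactly `d ^ (n - e) - 1 ≥ 0`, because
`d ^ (x + 1) * d ^ (n - e - 1) = d ^ e`.
-/

namespace Nat

theorem log_pow_succ_sub_one {b : ℕ} (hb : 1 < b) (x : ℕ) : log b (b ^ (x + 1) - 1) = x := by
  have hpow : b ^ x < b ^ (x + 1) := Nat.pow_lt_pow_right hb (lt_add_one x)
  refine log_eq_of_pow_le_of_lt_pow (by omega) ?_
  exact Nat.sub_lt (by positivity) one_pos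

theorem exists_eq_pow_succ_of_log_pred_lt {b k : ℕ} (hb : 1 < b)
    (h : log b (k - 1) < log b k) : ∃ x, k = b ^ (x + 1) := by
  have hk : k ≠ 0 := by rintro rfl; simp at h
  have hlt : k - 1 < b ^ log b k := lt_pow_of_log_lt hb h
  have hle : b ^ log b k ≤ k := pow_log_le_self b hk
  obtain ⟨x, hx⟩ := exists_eq_add_one_of_ne_zero (by omega : log b k ≠ 0)
  exact ⟨x, by rw [← hx]; omega⟩

end Nat

def hbar (d n x k : ℕ) : ℕ :=
  d ^ ((x + n + 1) / 2) + k * (d ^ (n - (x + n + 1) / 2) - 1)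

theorem hbar_mono {d n x k l : ℕ} (h : k ≤ l) : hbar d n x k ≤ hbar d n x l :=
  Nat.add_le_add_left (Nat.mul_le_mul_right _ h) _

theorem pow_add_add_pred_mul_pred_le {d : ℕ} (hd : 0 < d) (a b : ℕ) :
    d ^ (a + b) + (d ^ a - 1) * (d ^ (b + 1) - 1) ≤ d ^ (a + b + 1) + d ^ a * (d ^ b - 1) := by
  have hA : 1 ≤ d ^ a := Nat.one_le_pow _ _ hd
  have hB : 1 ≤ d ^ b := Nat.one_le_pow _ _ hd
  have hC : 1 ≤ d ^ b * d := Nat.one_le_pow (b + 1) d hd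
  rw [pow_add, pow_succ, pow_succ, pow_add]
  zify [hA, hB, hC]
  nlinarith

theorem hbar_pred_pow_le {d n x : ℕ} (hd : 0 < d) (hx : x + 1 ≤ n) :
    hbar d n x (d ^ (x + 1) - 1) ≤ hbar d n (x + 1) (d ^ (x + 1)) := by
  rcases Nat.even_or_odd (x + n) with ⟨m, hm⟩ | ⟨m, hm⟩
  · obtain ⟨b, rfl⟩ : ∃ b, n = x + 2 * b + 2 := ⟨m - x - 1, by omega⟩
    unfold hbar
    rw [show (x + (x + 2 * b + 2) + 1) / 2 = x + 1 + b by omega,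
      show (x + 1 + (x + 2 * b + 2) + 1) / 2 = x + 1 + b + 1 by omega,
      show x + 2 * b + 2 - (x + 1 + b) = b + 1 by omega,
      show x + 2 * b + 2 - (x + 1 + b + 1) = b by omega]
    exact pow_add_add_pred_mul_pred_le hd (x + 1) b
  · have hexp : hbar d n (x + 1) = hbar d n x := by
      funext k
      simp only [hbar, show (x + 1 + n + 1) / 2 = (x + n + 1) / 2 by omega]
    rw [hexp]
    exact hbar_mono (Nat.sub_le _ _)

theorem stmt_8_general (d n : ℕ) (hd : 2 ≤ d) (k : ℕ)
    (hlog : Nat.log d k ≤ n) :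
    d ^ ((Nat.log d (k - 1) + n + 1) / 2)
        + (k - 1) * (d ^ (n - (Nat.log d (k - 1) + n + 1) / 2) - 1)
      ≤ d ^ ((Nat.log d k + n + 1) / 2)
        + k * (d ^ (n - (Nat.log d k + n + 1) / 2) - 1) := by
  change hbar d n (Nat.log d (k - 1)) (k - 1) ≤ hbar d n (Nat.log d k) k
  rcases (Nat.log_mono_right (Nat.sub_le k 1) : Nat.log d (k - 1) ≤ Nat.log d k).eq_or_lt
    with heq | hlt
  · rw [heq]
    exact hbar_mono (Nat.sub_le k 1)
  · obtain ⟨x, rfl⟩ := Nat.exists_eq_pow_succ_of_log_pred_lt hd hlt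
    rw [Nat.log_pow hd] at hlog ⊢
    rw [Nat.log_pow_succ_sub_one hd]
    exact hbar_pred_pow_le (by omega) hlog

/-- The second technical lemma of the paper: with `x(k) = ⌊log_d k⌋`, the
function `h̄(k) = d^{⌊(x(k)+n+1)/2⌋} + k (d^{n-⌊(x(k)+n+1)/2⌋} - 1)` satisfies
`h̄(k-1) ≤ h̄(k)` for every `k ≥ 2` with `⌊log_d k⌋ ≤ n`. -/
theorem stmt_8 (d n : ℕ) (hd : 2 ≤ d) (hn : 1 ≤ n) (k : ℕ) (hk : 2 ≤ k)
    (hlog : Nat.log d k ≤ n) :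
    d ^ ((Nat.log d (k - 1) + n + 1) / 2)
        + (k - 1) * (d ^ (n - (Nat.log d (k - 1) + n + 1) / 2) - 1)
      ≤ d ^ ((Nat.log d k + n + 1) / 2)
        + k * (d ^ (n - (Nat.log d k + n + 1) / 2) - 1) :=
  stmt_8_general d n hd k hlog
end

section
/- Let V be a type and consider a finite sequence of T ≥ 1 operations, where operation t is either the insertion of an edge — an unordered pair {x,y} of distinct vertices of V together with a real weight w ∈ (0,1] — or the deletion of one edge that was inserted at an earlier time and has not yet been deleted. For each time 1 ≤ t ≤ T, let P(t) be the set of insertions performed at times ≤ t whose edges have not been deleted at any time ≤ t. Let W̄ be the maximum, over all times t and vertices z, of the total weight of the edges in P(t) incident to z, and let Δ̄ be the maximum, over all t and z, of the number of edges in P(t) incident to z whose weight exceeds 1/2. Then there exists an assignment c of a color (a natural number) to each insertion operation such that: (validity) for every time t, every vertex z, and every color γ, the total weight of the edges i ∈ P(t) incident to z with c(i) = γ is at most 1; and (number of colors) the total number of distinct colors used by c is at most 2Δ̄ + ⌈(3/8)·W̄⌉ + ⌈(3/10)·W̄⌉ + ⌈3·W̄⌉. -/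
open Finset

open Classical in
noncomputable def dwecPool (n0 N1 N2 N3 : ℕ) (w : ℝ) : Finset ℕ :=
  if 1/2 < w then Finset.range n0
  else if 2/5 < w then Finset.Ico n0 (n0 + N1 + N2 + N3)
  else if 1/3 < w then Finset.Ico (n0 + N1) (n0 + N1 + N2 + N3)
  else Finset.Ico (n0 + N1 + N2) (n0 + N1 + N2 + N3)

lemma dwecPool_subset {n0 N1 N2 N3 : ℕ} {w : ℝ} :
    dwecPool n0 N1 N2 N3 w ⊆ Finset.range (n0 + N1 + N2 + N3) := by
  unfold dwecPool
  split_ifs <;> intro γ hγ <;>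
    simp only [Finset.mem_range, Finset.mem_Ico] at * <;> omega

lemma dwecPool_heavy {n0 N1 N2 N3 : ℕ} {w : ℝ} {γ : ℕ}
    (h : γ ∈ dwecPool n0 N1 N2 N3 w) (hγ : γ < n0) : 1/2 < w := by
  unfold dwecPool at h
  split_ifs at h with h1 h2 h3 <;>
    simp only [Finset.mem_range, Finset.mem_Ico] at h <;> first | exact h1 | omega

lemma dwecPool_p1 {n0 N1 N2 N3 : ℕ} {w : ℝ} {γ : ℕ}
    (h : γ ∈ dwecPool n0 N1 N2 N3 w) (hγ : n0 ≤ γ) (hγ' : γ < n0 + N1) :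
    2/5 < w ∧ w ≤ 1/2 := by
  unfold dwecPool at h
  split_ifs at h with h1 h2 h3 <;>
    simp only [Finset.mem_range, Finset.mem_Ico] at h <;>
    first
    | exact ⟨h2, le_of_not_gt h1⟩
    | omega

lemma dwecPool_p2 {n0 N1 N2 N3 : ℕ} {w : ℝ} {γ : ℕ}
    (h : γ ∈ dwecPool n0 N1 N2 N3 w) (hγ : n0 + N1 ≤ γ) (hγ' : γ < n0 + N1 + N2) :
    1/3 < w ∧ w ≤ 1/2 := by
  unfold dwecPool at h
  split_ifs at h with h1 h2 h3 <;>
    simp only [Finset.mem_range, Finset.mem_Ico] at h <;>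
    first
    | exact ⟨by linarith, le_of_not_gt h1⟩
    | exact ⟨h3, le_of_not_gt h1⟩
    | omega

lemma dwecPool_p3 {n0 N1 N2 N3 : ℕ} {w : ℝ} {γ : ℕ}
    (h : γ ∈ dwecPool n0 N1 N2 N3 w) (hγ : n0 + N1 + N2 ≤ γ) : w ≤ 1/2 := by
  unfold dwecPool at h
  split_ifs at h with h1 h2 h3 <;>
    simp only [Finset.mem_range, Finset.mem_Ico] at h <;>
    first | exact le_of_not_gt h1 | omega

lemma dwec_two_members {ι : Type*} (C : Finset ι) (wt : ι → ℝ) (m w : ℝ)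
    (hm : 0 < m) (hw : w ≤ 1/2)
    (hmem : ∀ s ∈ C, m < wt s ∧ wt s ≤ 1/2)
    (hload : 1 - w < ∑ s ∈ C, wt s) :
    2 * m ≤ ∑ s ∈ C, wt s := by
  have h2 : 2 ≤ C.card := by
    by_contra hlt
    push_neg at hlt
    interval_cases h : C.card
    · rw [Finset.card_eq_zero] at h; subst h; simp at hload; linarith
    · obtain ⟨a, ha⟩ := Finset.card_eq_one.mp h
      subst ha
      simp only [Finset.sum_singleton] at hload
      have := (hmem a (Finset.mem_singleton_self a)).2
      linarith
  have := Finset.card_nsmul_le_sum C wt m (fun s hs => (hmem s hs).1.le)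
  have h3 : (2 : ℝ) * m ≤ C.card * m := by
    have : (2:ℝ) ≤ (C.card : ℝ) := by exact_mod_cast h2
    nlinarith
  calc (2:ℝ) * m ≤ C.card * m := h3
    _ = C.card • m := by rw [nsmul_eq_mul]
    _ ≤ _ := this

lemma dwec_free {ι : Type*} [DecidableEq ι] (n0 N1 N2 N3 : ℕ) (Wbar : ℝ)
    (hN1 : 3/8 * Wbar ≤ (N1 : ℝ)) (hN2 : 3/10 * Wbar ≤ (N2 : ℝ))
    (hN3 : 3 * Wbar ≤ (N3 : ℝ))
    (wt : ι → ℝ) (col : ι → ℕ) (Lx Ly : Finset ι) (w : ℝ)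
    (hw0 : 0 < w) (hw1 : w ≤ 1)
    (hmemx : ∀ s ∈ Lx, 0 < wt s ∧ col s ∈ dwecPool n0 N1 N2 N3 (wt s))
    (hmemy : ∀ s ∈ Ly, 0 < wt s ∧ col s ∈ dwecPool n0 N1 N2 N3 (wt s))
    (hWx : ∑ s ∈ Lx, wt s ≤ Wbar - w) (hWy : ∑ s ∈ Ly, wt s ≤ Wbar - w)
    (hDx : 1/2 < w → 2 * (Lx.filter (fun s => 1/2 < wt s)).card + 2 ≤ n0)
    (hDy : 1/2 < w → 2 * (Ly.filter (fun s => 1/2 < wt s)).card + 2 ≤ n0) :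
    ∃ γ ∈ dwecPool n0 N1 N2 N3 w,
      (∑ s ∈ Lx.filter (fun s => col s = γ), wt s) + w ≤ 1 ∧
      (∑ s ∈ Ly.filter (fun s => col s = γ), wt s) + w ≤ 1 := by
  by_contra hcon
  push_neg at hcon
  have hblock : ∀ γ ∈ dwecPool n0 N1 N2 N3 w,
      1 < (∑ s ∈ Lx.filter (fun s => col s = γ), wt s) + w ∨
      1 < (∑ s ∈ Ly.filter (fun s => col s = γ), wt s) + w := by
    intro γ hγ
    by_contra hc
    push_neg at hc
    exact absurd (hcon γ hγ hc.1) (not_lt.mpr hc.2)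
  rcases lt_or_ge (1/2 : ℝ) w with hw | hw
  · -- heavy case
    have hp : dwecPool n0 N1 N2 N3 w = Finset.range n0 := if_pos hw
    have key : ∀ (L : Finset ι),
        (∀ s ∈ L, 0 < wt s ∧ col s ∈ dwecPool n0 N1 N2 N3 (wt s)) →
        ∀ γ, γ < n0 → 1 < (∑ s ∈ L.filter (fun s => col s = γ), wt s) + w →
        γ ∈ (L.filter (fun s => 1/2 < wt s)).image col := by
      intro L hmem γ hγ hb
      have hpos : 0 < ∑ s ∈ L.filter (fun s => col s = γ), wt s := by linarith
      obtain ⟨s, hs, -⟩ := Finset.exists_ne_zero_of_sum_ne_zero hpos.ne'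
      rw [Finset.mem_filter] at hs
      have hheavy : 1/2 < wt s := by
        refine dwecPool_heavy (hmem s hs.1).2 ?_
        rw [hs.2]; exact hγ
      exact Finset.mem_image.mpr ⟨s, Finset.mem_filter.mpr ⟨hs.1, hheavy⟩, hs.2⟩
    have hcov : Finset.range n0 ⊆
        (Lx.filter (fun s => 1/2 < wt s)).image col ∪
        (Ly.filter (fun s => 1/2 < wt s)).image col := by
      intro γ hγ
      rw [Finset.mem_range] at hγ
      rcases hblock γ (by rw [hp]; exact Finset.mem_range.mpr hγ) with hb | hb
      · exact Finset.mem_union_left _ (key Lx hmemx γ hγ hb)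
      · exact Finset.mem_union_right _ (key Ly hmemy γ hγ hb)
    have h1 := Finset.card_le_card hcov
    have h2 := Finset.card_union_le ((Lx.filter (fun s => 1/2 < wt s)).image col)
        ((Ly.filter (fun s => 1/2 < wt s)).image col)
    have h3 := Finset.card_image_le (s := Lx.filter (fun s => 1/2 < wt s)) (f := col)
    have h4 := Finset.card_image_le (s := Ly.filter (fun s => 1/2 < wt s)) (f := col)
    rw [Finset.card_range] at h1
    have h5 := hDx hw
    have h6 := hDy hw
    omega
  · -- light case
    have hWw : 0 ≤ Wbar - w := le_trans (Finset.sum_nonneg fun s hs => (hmemx s hs).1.le) hWx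
    have hcount : ∀ (L : Finset ι),
        (∀ s ∈ L, 0 < wt s ∧ col s ∈ dwecPool n0 N1 N2 N3 (wt s)) →
        (∑ s ∈ L, wt s ≤ Wbar - w) →
        4/5 * (((Finset.Ico n0 (n0+N1)).filter (fun γ =>
            1 < (∑ s ∈ L.filter (fun s => col s = γ), wt s) + w)).card : ℝ)
        + 2/3 * (((Finset.Ico (n0+N1) (n0+N1+N2)).filter (fun γ =>
            1 < (∑ s ∈ L.filter (fun s => col s = γ), wt s) + w)).card : ℝ)
        + (1-w) * (((Finset.Ico (n0+N1+N2) (n0+N1+N2+N3)).filter (fun γ =>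
            1 < (∑ s ∈ L.filter (fun s => col s = γ), wt s) + w)).card : ℝ)
        ≤ Wbar - w := by
      intro L hmem hWL
      set f : ℕ → ℝ := fun γ => ∑ s ∈ L.filter (fun s => col s = γ), wt s with hf
      set B1 := (Finset.Ico n0 (n0+N1)).filter (fun γ => 1 < f γ + w) with hB1
      set B2 := (Finset.Ico (n0+N1) (n0+N1+N2)).filter (fun γ => 1 < f γ + w) with hB2
      set B3 := (Finset.Ico (n0+N1+N2) (n0+N1+N2+N3)).filter (fun γ => 1 < f γ + w) with hB3
      have hload1 : ∀ γ ∈ B1, 4/5 ≤ f γ := by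
        intro γ hγ
        rw [hB1, Finset.mem_filter, Finset.mem_Ico] at hγ
        have hb := hγ.2
        simp only [hf] at hb ⊢
        have hm : ∀ s ∈ L.filter (fun s => col s = γ), 2/5 < wt s ∧ wt s ≤ 1/2 := by
          intro s hs
          rw [Finset.mem_filter] at hs
          refine dwecPool_p1 (hmem s hs.1).2 ?_ ?_ <;> rw [hs.2] <;> omega
        have h2m := dwec_two_members _ wt (2/5) w (by norm_num) hw hm (by linarith)
        linarith
      have hload2 : ∀ γ ∈ B2, 2/3 ≤ f γ := by
        intro γ hγ
        rw [hB2, Finset.mem_filter, Finset.mem_Ico] at hγ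
        have hb := hγ.2
        simp only [hf] at hb ⊢
        have hm : ∀ s ∈ L.filter (fun s => col s = γ), 1/3 < wt s ∧ wt s ≤ 1/2 := by
          intro s hs
          rw [Finset.mem_filter] at hs
          refine dwecPool_p2 (hmem s hs.1).2 ?_ ?_ <;> rw [hs.2] <;> omega
        have h2m := dwec_two_members _ wt (1/3) w (by norm_num) hw hm (by linarith)
        linarith
      have hload3 : ∀ γ ∈ B3, 1 - w ≤ f γ := by
        intro γ hγ
        rw [hB3, Finset.mem_filter] at hγ
        linarith [hγ.2]
      have hc1 : 4/5 * (B1.card : ℝ) ≤ ∑ γ ∈ B1, f γ := by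
        have := Finset.card_nsmul_le_sum B1 f (4/5) hload1
        rw [nsmul_eq_mul] at this; linarith
      have hc2 : 2/3 * (B2.card : ℝ) ≤ ∑ γ ∈ B2, f γ := by
        have := Finset.card_nsmul_le_sum B2 f (2/3) hload2
        rw [nsmul_eq_mul] at this; linarith
      have hc3 : (1-w) * (B3.card : ℝ) ≤ ∑ γ ∈ B3, f γ := by
        have := Finset.card_nsmul_le_sum B3 f (1-w) hload3
        rw [nsmul_eq_mul] at this; linarith
      have hd12 : Disjoint B1 B2 := by
        rw [Finset.disjoint_left]
        intro γ h1 h2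
        rw [hB1, Finset.mem_filter, Finset.mem_Ico] at h1
        rw [hB2, Finset.mem_filter, Finset.mem_Ico] at h2
        omega
      have hd13 : Disjoint (B1 ∪ B2) B3 := by
        rw [Finset.disjoint_left]
        intro γ h1 h2
        rw [Finset.mem_union, hB1, hB2, Finset.mem_filter, Finset.mem_filter,
          Finset.mem_Ico, Finset.mem_Ico] at h1
        rw [hB3, Finset.mem_filter, Finset.mem_Ico] at h2
        omega
      have hsplit : ∑ γ ∈ B1 ∪ B2 ∪ B3, f γ
          = ∑ γ ∈ B1, f γ + ∑ γ ∈ B2, f γ + ∑ γ ∈ B3, f γ := by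
        rw [Finset.sum_union hd13, Finset.sum_union hd12]
      have hsum : ∑ γ ∈ B1 ∪ B2 ∪ B3, f γ ≤ ∑ s ∈ L, wt s := by
        rw [hf]
        rw [Finset.sum_fiberwise_eq_sum_filter L (B1 ∪ B2 ∪ B3) col wt]
        exact Finset.sum_le_sum_of_subset_of_nonneg (Finset.filter_subset _ _)
          (fun s hs _ => (hmem s hs).1.le)
      linarith
    have hcx := hcount Lx hmemx hWx
    have hcy := hcount Ly hmemy hWy
    -- coverage facts
    have hcov : ∀ (P : Finset ℕ), P ⊆ dwecPool n0 N1 N2 N3 w →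
        (P.card : ℝ) ≤
          ((P.filter (fun γ =>
            1 < (∑ s ∈ Lx.filter (fun s => col s = γ), wt s) + w)).card : ℝ)
          + ((P.filter (fun γ =>
            1 < (∑ s ∈ Ly.filter (fun s => col s = γ), wt s) + w)).card : ℝ) := by
      intro P hP
      have hsub : P ⊆ (P.filter (fun γ =>
            1 < (∑ s ∈ Lx.filter (fun s => col s = γ), wt s) + w))
          ∪ (P.filter (fun γ =>
            1 < (∑ s ∈ Ly.filter (fun s => col s = γ), wt s) + w)) := by
        intro γ hγ
        rcases hblock γ (hP hγ) with hb | hb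
        · exact Finset.mem_union_left _ (Finset.mem_filter.mpr ⟨hγ, hb⟩)
        · exact Finset.mem_union_right _ (Finset.mem_filter.mpr ⟨hγ, hb⟩)
      have := le_trans (Finset.card_le_card hsub) (Finset.card_union_le _ _)
      exact_mod_cast this
    have hcard1 : ((Finset.Ico n0 (n0+N1)).card : ℝ) = N1 := by
      rw [Nat.card_Ico]; norm_num
    have hcard2 : ((Finset.Ico (n0+N1) (n0+N1+N2)).card : ℝ) = N2 := by
      rw [Nat.card_Ico]; norm_num
    have hcard3 : ((Finset.Ico (n0+N1+N2) (n0+N1+N2+N3)).card : ℝ) = N3 := by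
      rw [Nat.card_Ico]; norm_num
    have hnn : ∀ (P : Finset ℕ) (q : ℕ → Prop) (h : DecidablePred q),
        (0:ℝ) ≤ ((P.filter q).card : ℝ) := fun _ _ _ => Nat.cast_nonneg _
    rcases lt_or_ge (2/5 : ℝ) w with hw2 | hw2
    · -- type 1
      have hp : dwecPool n0 N1 N2 N3 w = Finset.Ico n0 (n0+N1+N2+N3) := by
        unfold dwecPool
        rw [if_neg (not_lt.mpr hw), if_pos hw2]
      have hs1 : Finset.Ico n0 (n0+N1) ⊆ dwecPool n0 N1 N2 N3 w := by
        rw [hp]; apply Finset.Ico_subset_Ico <;> omega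
      have hs2 : Finset.Ico (n0+N1) (n0+N1+N2) ⊆ dwecPool n0 N1 N2 N3 w := by
        rw [hp]; apply Finset.Ico_subset_Ico <;> omega
      have hs3 : Finset.Ico (n0+N1+N2) (n0+N1+N2+N3) ⊆ dwecPool n0 N1 N2 N3 w := by
        rw [hp]; apply Finset.Ico_subset_Ico <;> omega
      have hb1 := hcov _ hs1
      have hb2 := hcov _ hs2
      have hb3 := hcov _ hs3
      rw [hcard1] at hb1
      rw [hcard2] at hb2
      rw [hcard3] at hb3
      -- (1-w) ≥ 1/2, so (1-w)*b3 ≥ 1/2*b3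
      set b3x := (((Finset.Ico (n0+N1+N2) (n0+N1+N2+N3)).filter (fun γ =>
            1 < (∑ s ∈ Lx.filter (fun s => col s = γ), wt s) + w)).card : ℝ)
      set b3y := (((Finset.Ico (n0+N1+N2) (n0+N1+N2+N3)).filter (fun γ =>
            1 < (∑ s ∈ Ly.filter (fun s => col s = γ), wt s) + w)).card : ℝ)
      have h3x : 1/2 * b3x ≤ (1-w) * b3x :=
        mul_le_mul_of_nonneg_right (by linarith) (Nat.cast_nonneg _)
      have h3y : 1/2 * b3y ≤ (1-w) * b3y :=
        mul_le_mul_of_nonneg_right (by linarith) (Nat.cast_nonneg _)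
      linarith
    · rcases lt_or_ge (1/3 : ℝ) w with hw3 | hw3
      · -- type 2
        have hp : dwecPool n0 N1 N2 N3 w = Finset.Ico (n0+N1) (n0+N1+N2+N3) := by
          unfold dwecPool
          rw [if_neg (not_lt.mpr hw), if_neg (not_lt.mpr hw2), if_pos hw3]
        have hs2 : Finset.Ico (n0+N1) (n0+N1+N2) ⊆ dwecPool n0 N1 N2 N3 w := by
          rw [hp]; apply Finset.Ico_subset_Ico <;> omega
        have hs3 : Finset.Ico (n0+N1+N2) (n0+N1+N2+N3) ⊆ dwecPool n0 N1 N2 N3 w := by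
          rw [hp]; apply Finset.Ico_subset_Ico <;> omega
        have hb2 := hcov _ hs2
        have hb3 := hcov _ hs3
        rw [hcard2] at hb2
        rw [hcard3] at hb3
        set b3x := (((Finset.Ico (n0+N1+N2) (n0+N1+N2+N3)).filter (fun γ =>
              1 < (∑ s ∈ Lx.filter (fun s => col s = γ), wt s) + w)).card : ℝ)
        set b3y := (((Finset.Ico (n0+N1+N2) (n0+N1+N2+N3)).filter (fun γ =>
              1 < (∑ s ∈ Ly.filter (fun s => col s = γ), wt s) + w)).card : ℝ)
        have h3x : 3/5 * b3x ≤ (1-w) * b3x :=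
          mul_le_mul_of_nonneg_right (by linarith) (Nat.cast_nonneg _)
        have h3y : 3/5 * b3y ≤ (1-w) * b3y :=
          mul_le_mul_of_nonneg_right (by linarith) (Nat.cast_nonneg _)
        have hnx1 := hnn (Finset.Ico n0 (n0+N1)) (fun γ =>
            1 < (∑ s ∈ Lx.filter (fun s => col s = γ), wt s) + w) (by infer_instance)
        have hny1 := hnn (Finset.Ico n0 (n0+N1)) (fun γ =>
            1 < (∑ s ∈ Ly.filter (fun s => col s = γ), wt s) + w) (by infer_instance)
        linarith
      · -- type 3
        have hp : dwecPool n0 N1 N2 N3 w = Finset.Ico (n0+N1+N2) (n0+N1+N2+N3) := by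
          unfold dwecPool
          rw [if_neg (not_lt.mpr hw), if_neg (not_lt.mpr hw2), if_neg (not_lt.mpr hw3)]
        have hs3 : Finset.Ico (n0+N1+N2) (n0+N1+N2+N3) ⊆ dwecPool n0 N1 N2 N3 w :=
          le_of_eq hp.symm
        have hb3 := hcov _ hs3
        rw [hcard3] at hb3
        set b3x := (((Finset.Ico (n0+N1+N2) (n0+N1+N2+N3)).filter (fun γ =>
              1 < (∑ s ∈ Lx.filter (fun s => col s = γ), wt s) + w)).card : ℝ)
        set b3y := (((Finset.Ico (n0+N1+N2) (n0+N1+N2+N3)).filter (fun γ =>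
              1 < (∑ s ∈ Ly.filter (fun s => col s = γ), wt s) + w)).card : ℝ)
        have h3x : 2/3 * b3x ≤ (1-w) * b3x :=
          mul_le_mul_of_nonneg_right (by linarith) (Nat.cast_nonneg _)
        have h3y : 2/3 * b3y ≤ (1-w) * b3y :=
          mul_le_mul_of_nonneg_right (by linarith) (Nat.cast_nonneg _)
        have hnx1 := hnn (Finset.Ico n0 (n0+N1)) (fun γ =>
            1 < (∑ s ∈ Lx.filter (fun s => col s = γ), wt s) + w) (by infer_instance)
        have hny1 := hnn (Finset.Ico n0 (n0+N1)) (fun γ =>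
            1 < (∑ s ∈ Ly.filter (fun s => col s = γ), wt s) + w) (by infer_instance)
        have hnx2 := hnn (Finset.Ico (n0+N1) (n0+N1+N2)) (fun γ =>
            1 < (∑ s ∈ Lx.filter (fun s => col s = γ), wt s) + w) (by infer_instance)
        have hny2 := hnn (Finset.Ico (n0+N1) (n0+N1+N2)) (fun γ =>
            1 < (∑ s ∈ Ly.filter (fun s => col s = γ), wt s) + w) (by infer_instance)
        linarith

/-- The dwec algorithm guarantee (competitive ratio `5.675` version): for any
sequence of `T ≥ 1` operations, where operation `t` either inserts an edge
(an unordered pair of distinct vertices with a weight in `(0,1]`) or deletes a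
previously inserted, not-yet-deleted edge, there is a coloring of the
insertions such that at every time each color class has total weight at most
`1` at every vertex, and the total number of colors used is at most
`2Δ̄ + ⌈(3/8)W̄⌉ + ⌈(3/10)W̄⌉ + ⌈3W̄⌉`, where `W̄` bounds (over all times and
vertices) the total live weight at a vertex and `Δ̄` bounds the number of live
incident edges of weight `> 1/2` at a vertex.

Encoding: `isIns t` says operation `t` is an insertion, with endpoints `ep t`
and weight `wt t`; otherwise operation `t` deletes the insertion `delOf t`.
`live t` is the set `P(t)` of insertions performed at times `≤ t` and not yet
deleted at any time `≤ t`. -/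
theorem stmt_10 {V : Type*} [DecidableEq V] (T : ℕ) (hT : 1 ≤ T)
    (isIns : Fin T → Bool) (ep : Fin T → V × V) (wt : Fin T → ℝ)
    (delOf : Fin T → Fin T)
    (hins : ∀ t, isIns t = true → (ep t).1 ≠ (ep t).2 ∧ 0 < wt t ∧ wt t ≤ 1)
    (hdel : ∀ t, isIns t = false →
      isIns (delOf t) = true ∧ delOf t < t ∧
        ∀ t', t' < t → isIns t' = false → delOf t' ≠ delOf t)
    (live : Fin T → Finset (Fin T))
    (hlive : ∀ t, live t = Finset.univ.filter (fun s =>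
      s ≤ t ∧ isIns s = true ∧ ∀ t', t' ≤ t → isIns t' = false → delOf t' ≠ s))
    (Wbar : ℝ) (Dbar : ℕ)
    (hW : ∀ t (z : V),
      ∑ s ∈ (live t).filter (fun s => (ep s).1 = z ∨ (ep s).2 = z), wt s ≤ Wbar)
    (hD : ∀ t (z : V),
      ((live t).filter (fun s => ((ep s).1 = z ∨ (ep s).2 = z) ∧ 1/2 < wt s)).card
        ≤ Dbar) :
    ∃ c : Fin T → ℕ,
      (∀ t (z : V) (γ : ℕ),
        ∑ s ∈ (live t).filter (fun s => ((ep s).1 = z ∨ (ep s).2 = z) ∧ c s = γ),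
          wt s ≤ 1) ∧
      (((Finset.univ.filter (fun t => isIns t = true)).image c).card : ℝ)
        ≤ 2 * (Dbar : ℝ) + (⌈(3/8 : ℝ) * Wbar⌉ : ℝ) + (⌈(3/10 : ℝ) * Wbar⌉ : ℝ)
          + (⌈(3 : ℝ) * Wbar⌉ : ℝ) := by
  classical
  have hlive_iff : ∀ (u t : Fin T), u ∈ live t ↔
      (u ≤ t ∧ isIns u = true ∧ ∀ t', t' ≤ t → isIns t' = false → delOf t' ≠ u) := by
    intro u t
    rw [hlive]
    simp only [Finset.mem_filter, Finset.mem_univ, true_and]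
  have hlive_ins : ∀ (u t : Fin T), u ∈ live t → isIns u = true :=
    fun u t h => ((hlive_iff u t).mp h).2.1
  have hlive_le : ∀ (u t : Fin T), u ∈ live t → u ≤ t :=
    fun u t h => ((hlive_iff u t).mp h).1
  have hlive_mono : ∀ (s u t : Fin T), u ≤ t → s ∈ live t → s ≤ u → s ∈ live u := by
    intro s u t hut hs hsu
    rw [hlive_iff] at hs ⊢
    exact ⟨hsu, hs.2.1, fun t' ht' => hs.2.2 t' (le_trans ht' hut)⟩
  have hself : ∀ t : Fin T, isIns t = true → t ∈ live t := by
    intro t hi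
    rw [hlive_iff]
    refine ⟨le_refl t, hi, fun t' ht' hf heq => ?_⟩
    have h1 := (hdel t' hf).2.1
    rw [heq] at h1
    exact absurd h1 (not_lt.mpr ht')
  -- Wbar is positive
  have hWpos : 0 < Wbar := by
    set t0 : Fin T := ⟨0, hT⟩ with ht0
    have hi0 : isIns t0 = true := by
      by_contra h
      have h1 := (hdel t0 (by simpa using h)).2.1
      have : (delOf t0).val < (0 : ℕ) := h1
      omega
    have hl0 : t0 ∈ live t0 := hself t0 hi0
    have hmem0 : t0 ∈ (live t0).filter
        (fun s => (ep s).1 = (ep t0).1 ∨ (ep s).2 = (ep t0).1) :=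
      Finset.mem_filter.mpr ⟨hl0, Or.inl rfl⟩
    have hnn : ∀ s ∈ (live t0).filter
        (fun s => (ep s).1 = (ep t0).1 ∨ (ep s).2 = (ep t0).1), 0 ≤ wt s := by
      intro s hs
      exact (hins s (hlive_ins s t0 (Finset.mem_of_mem_filter s hs))).2.1.le
    have h1 := Finset.single_le_sum hnn hmem0
    have h2 := hW t0 (ep t0).1
    have h3 := (hins t0 hi0).2.1
    linarith
  set n0 := 2 * Dbar with hn0
  set N1 := (⌈(3/8 : ℝ) * Wbar⌉).toNat with hN1def
  set N2 := (⌈(3/10 : ℝ) * Wbar⌉).toNat with hN2def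
  set N3 := (⌈(3 : ℝ) * Wbar⌉).toNat with hN3def
  have hceil1 : ((N1 : ℕ) : ℝ) = ((⌈(3/8 : ℝ) * Wbar⌉ : ℤ) : ℝ) := by
    rw [hN1def]
    exact_mod_cast congrArg (fun z : ℤ => (z : ℝ))
      (Int.toNat_of_nonneg (Int.ceil_nonneg (by positivity)))
  have hceil2 : ((N2 : ℕ) : ℝ) = ((⌈(3/10 : ℝ) * Wbar⌉ : ℤ) : ℝ) := by
    rw [hN2def]
    exact_mod_cast congrArg (fun z : ℤ => (z : ℝ))
      (Int.toNat_of_nonneg (Int.ceil_nonneg (by positivity)))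
  have hceil3 : ((N3 : ℕ) : ℝ) = ((⌈(3 : ℝ) * Wbar⌉ : ℤ) : ℝ) := by
    rw [hN3def]
    exact_mod_cast congrArg (fun z : ℤ => (z : ℝ))
      (Int.toNat_of_nonneg (Int.ceil_nonneg (by positivity)))
  have hN1 : 3/8 * Wbar ≤ (N1 : ℝ) := by rw [hceil1]; exact Int.le_ceil _
  have hN2 : 3/10 * Wbar ≤ (N2 : ℝ) := by rw [hceil2]; exact Int.le_ceil _
  have hN3 : 3 * Wbar ≤ (N3 : ℝ) := by rw [hceil3]; exact Int.le_ceil _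
  -- main induction: greedy coloring
  have key : ∀ n : ℕ, ∃ c : Fin T → ℕ, ∀ t : Fin T, (t : ℕ) < n → isIns t = true →
      c t ∈ dwecPool n0 N1 N2 N3 (wt t) ∧
      ∀ z : V, ((ep t).1 = z ∨ (ep t).2 = z) →
        (∑ s ∈ ((live t).erase t).filter
            (fun s => ((ep s).1 = z ∨ (ep s).2 = z) ∧ c s = c t), wt s) + wt t ≤ 1 := by
    intro n
    induction n with
    | zero => exact ⟨fun _ => 0, fun t ht => absurd ht (Nat.not_lt_zero _)⟩
    | succ n ih =>
      obtain ⟨c, hc⟩ := ih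
      by_cases hn : n < T
      · set t₀ : Fin T := ⟨n, hn⟩ with ht₀
        by_cases hins0 : isIns t₀ = true
        · obtain ⟨-, hw0, hw1⟩ := hins t₀ hins0
          have ht0live : t₀ ∈ live t₀ := hself t₀ hins0
          have herase : ∀ s ∈ (live t₀).erase t₀, isIns s = true ∧ (s : ℕ) < n := by
            intro s hs
            have h1 := Finset.mem_of_mem_erase hs
            have h2 := Finset.ne_of_mem_erase hs
            refine ⟨hlive_ins s t₀ h1, ?_⟩
            have h3 : (s : ℕ) ≤ n := hlive_le s t₀ h1
            have h4 : (s : ℕ) ≠ n := fun h => h2 (Fin.ext h)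
            omega
          set Lx := ((live t₀).erase t₀).filter
            (fun s => (ep s).1 = (ep t₀).1 ∨ (ep s).2 = (ep t₀).1) with hLx
          set Ly := ((live t₀).erase t₀).filter
            (fun s => (ep s).1 = (ep t₀).2 ∨ (ep s).2 = (ep t₀).2) with hLy
          have hmemx : ∀ s ∈ Lx, 0 < wt s ∧ c s ∈ dwecPool n0 N1 N2 N3 (wt s) := by
            intro s hs
            rw [hLx, Finset.mem_filter] at hs
            obtain ⟨hi, hlt⟩ := herase s hs.1
            exact ⟨(hins s hi).2.1, (hc s hlt hi).1⟩
          have hmemy : ∀ s ∈ Ly, 0 < wt s ∧ c s ∈ dwecPool n0 N1 N2 N3 (wt s) := by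
            intro s hs
            rw [hLy, Finset.mem_filter] at hs
            obtain ⟨hi, hlt⟩ := herase s hs.1
            exact ⟨(hins s hi).2.1, (hc s hlt hi).1⟩
          have hWx : ∑ s ∈ Lx, wt s ≤ Wbar - wt t₀ := by
            have heq : Lx = ((live t₀).filter
                (fun s => (ep s).1 = (ep t₀).1 ∨ (ep s).2 = (ep t₀).1)).erase t₀ := by
              rw [hLx, Finset.filter_erase]
            have hmem : t₀ ∈ (live t₀).filter
                (fun s => (ep s).1 = (ep t₀).1 ∨ (ep s).2 = (ep t₀).1) :=
              Finset.mem_filter.mpr ⟨ht0live, Or.inl rfl⟩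
            have h1 := Finset.sum_erase_add _ wt hmem
            have h2 := hW t₀ (ep t₀).1
            rw [heq]
            linarith
          have hWy : ∑ s ∈ Ly, wt s ≤ Wbar - wt t₀ := by
            have heq : Ly = ((live t₀).filter
                (fun s => (ep s).1 = (ep t₀).2 ∨ (ep s).2 = (ep t₀).2)).erase t₀ := by
              rw [hLy, Finset.filter_erase]
            have hmem : t₀ ∈ (live t₀).filter
                (fun s => (ep s).1 = (ep t₀).2 ∨ (ep s).2 = (ep t₀).2) :=
              Finset.mem_filter.mpr ⟨ht0live, Or.inr rfl⟩
            have h1 := Finset.sum_erase_add _ wt hmem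
            have h2 := hW t₀ (ep t₀).2
            rw [heq]
            linarith
          have hDx : 1/2 < wt t₀ →
              2 * (Lx.filter (fun s => 1/2 < wt s)).card + 2 ≤ n0 := by
            intro hh
            have heq : Lx.filter (fun s => 1/2 < wt s)
                = ((live t₀).filter (fun s =>
                    ((ep s).1 = (ep t₀).1 ∨ (ep s).2 = (ep t₀).1) ∧ 1/2 < wt s)).erase t₀ := by
              rw [hLx, Finset.filter_filter, Finset.filter_erase]
            have hmem : t₀ ∈ (live t₀).filter (fun s =>
                ((ep s).1 = (ep t₀).1 ∨ (ep s).2 = (ep t₀).1) ∧ 1/2 < wt s) :=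
              Finset.mem_filter.mpr ⟨ht0live, Or.inl rfl, hh⟩
            have h1 := hD t₀ (ep t₀).1
            have h2 : 1 ≤ ((live t₀).filter (fun s =>
                ((ep s).1 = (ep t₀).1 ∨ (ep s).2 = (ep t₀).1) ∧ 1/2 < wt s)).card :=
              Finset.card_pos.mpr ⟨t₀, hmem⟩
            rw [heq, Finset.card_erase_of_mem hmem, hn0]
            omega
          have hDy : 1/2 < wt t₀ →
              2 * (Ly.filter (fun s => 1/2 < wt s)).card + 2 ≤ n0 := by
            intro hh
            have heq : Ly.filter (fun s => 1/2 < wt s)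
                = ((live t₀).filter (fun s =>
                    ((ep s).1 = (ep t₀).2 ∨ (ep s).2 = (ep t₀).2) ∧ 1/2 < wt s)).erase t₀ := by
              rw [hLy, Finset.filter_filter, Finset.filter_erase]
            have hmem : t₀ ∈ (live t₀).filter (fun s =>
                ((ep s).1 = (ep t₀).2 ∨ (ep s).2 = (ep t₀).2) ∧ 1/2 < wt s) :=
              Finset.mem_filter.mpr ⟨ht0live, Or.inr rfl, hh⟩
            have h1 := hD t₀ (ep t₀).2
            have h2 : 1 ≤ ((live t₀).filter (fun s =>
                ((ep s).1 = (ep t₀).2 ∨ (ep s).2 = (ep t₀).2) ∧ 1/2 < wt s)).card :=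
              Finset.card_pos.mpr ⟨t₀, hmem⟩
            rw [heq, Finset.card_erase_of_mem hmem, hn0]
            omega
          obtain ⟨γ, hγpool, hγx, hγy⟩ := dwec_free n0 N1 N2 N3 Wbar hN1 hN2 hN3
            wt c Lx Ly (wt t₀) hw0 hw1 hmemx hmemy hWx hWy hDx hDy
          refine ⟨Function.update c t₀ γ, ?_⟩
          intro t ht hi
          have hcase : (t : ℕ) < n ∨ t = t₀ := by
            rcases Nat.lt_or_ge (t : ℕ) n with h | h
            · exact Or.inl h
            · exact Or.inr (Fin.ext (show (t:ℕ) = n by omega))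
          have hupdne : ∀ s : Fin T, s ≠ t₀ → Function.update c t₀ γ s = c s :=
            fun s hs => Function.update_of_ne hs _ _
          rcases hcase with hlt | rfl
          · have htne : t ≠ t₀ := by
              intro h
              rw [h] at hlt
              exact absurd (show n < n from hlt) (lt_irrefl n)
            have hct : Function.update c t₀ γ t = c t := hupdne t htne
            obtain ⟨hpool, hval⟩ := hc t hlt hi
            refine ⟨by rw [hct]; exact hpool, ?_⟩
            intro z hz
            have hv := hval z hz
            have hsums : ((live t).erase t).filter
                (fun s => ((ep s).1 = z ∨ (ep s).2 = z) ∧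
                  Function.update c t₀ γ s = Function.update c t₀ γ t)
                = ((live t).erase t).filter
                (fun s => ((ep s).1 = z ∨ (ep s).2 = z) ∧ c s = c t) := by
              apply Finset.filter_congr
              intro s hs
              have hsne : s ≠ t₀ := by
                intro h
                have h1 : (s : ℕ) ≤ (t : ℕ) :=
                  hlive_le s t (Finset.mem_of_mem_erase hs)
                rw [h] at h1
                simp only [ht₀] at h1
                omega
              rw [hupdne s hsne, hct]
            rw [hsums]
            exact hv
          · have hct : Function.update c t₀ γ t₀ = γ := Function.update_self _ _ _
            refine ⟨by rw [hct]; exact hγpool, ?_⟩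
            intro z hz
            rcases hz with hz | hz
            · subst hz
              have heq : ((live t₀).erase t₀).filter
                  (fun s => ((ep s).1 = (ep t₀).1 ∨ (ep s).2 = (ep t₀).1) ∧
                    Function.update c t₀ γ s = Function.update c t₀ γ t₀)
                  = Lx.filter (fun s => c s = γ) := by
                rw [hLx, Finset.filter_filter]
                apply Finset.filter_congr
                intro s hs
                rw [hupdne s (Finset.ne_of_mem_erase hs), hct]
              rw [heq]
              exact hγx
            · subst hz
              have heq : ((live t₀).erase t₀).filter
                  (fun s => ((ep s).1 = (ep t₀).2 ∨ (ep s).2 = (ep t₀).2) ∧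
                    Function.update c t₀ γ s = Function.update c t₀ γ t₀)
                  = Ly.filter (fun s => c s = γ) := by
                rw [hLy, Finset.filter_filter]
                apply Finset.filter_congr
                intro s hs
                rw [hupdne s (Finset.ne_of_mem_erase hs), hct]
              rw [heq]
              exact hγy
        · refine ⟨c, fun t ht hi => ?_⟩
          have hcase : (t : ℕ) < n ∨ t = t₀ := by
            rcases Nat.lt_or_ge (t : ℕ) n with h | h
            · exact Or.inl h
            · exact Or.inr (Fin.ext (show (t:ℕ) = n by omega))
          rcases hcase with hlt | rfl
          · exact hc t hlt hi
          · exact absurd hi hins0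
      · refine ⟨c, fun t ht => hc t ?_⟩
        have := t.isLt
        omega
  obtain ⟨c, hc⟩ := key T
  have hgood := fun (t : Fin T) => hc t t.isLt
  refine ⟨c, ?_, ?_⟩
  · -- validity
    intro t z γ
    set S := (live t).filter (fun s => ((ep s).1 = z ∨ (ep s).2 = z) ∧ c s = γ) with hS
    rcases S.eq_empty_or_nonempty with he | hne
    · rw [he]
      simp
    · have hmS := S.max'_mem hne
      set m := S.max' hne with hm
      have hmS' := hmS
      rw [hS, Finset.mem_filter] at hmS'
      have hmlive := hmS'.1
      have hminc := hmS'.2.1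
      have hmcol := hmS'.2.2
      have hmi : isIns m = true := hlive_ins m t hmlive
      obtain ⟨-, hval⟩ := hgood m hmi
      have hv := hval z hminc
      have hsub : S.erase m ⊆ ((live m).erase m).filter
          (fun s => ((ep s).1 = z ∨ (ep s).2 = z) ∧ c s = c m) := by
        intro s hs
        have hsm : s ≠ m := Finset.ne_of_mem_erase hs
        have hsS := Finset.mem_of_mem_erase hs
        have hsle : s ≤ m := S.le_max' s hsS
        rw [hS, Finset.mem_filter] at hsS
        refine Finset.mem_filter.mpr ⟨Finset.mem_erase.mpr ⟨hsm, ?_⟩, hsS.2.1,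
          by rw [hsS.2.2, hmcol]⟩
        exact hlive_mono s m t (hlive_le m t hmlive) hsS.1 hsle
      have hnn : ∀ s ∈ ((live m).erase m).filter
          (fun s => ((ep s).1 = z ∨ (ep s).2 = z) ∧ c s = c m), 0 ≤ wt s := by
        intro s hs
        have h1 := Finset.mem_of_mem_erase (Finset.mem_of_mem_filter s hs)
        exact (hins s (hlive_ins s m h1)).2.1.le
      have h1 : ∑ s ∈ S.erase m, wt s ≤ ∑ s ∈ ((live m).erase m).filter
          (fun s => ((ep s).1 = z ∨ (ep s).2 = z) ∧ c s = c m), wt s :=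
        Finset.sum_le_sum_of_subset_of_nonneg hsub (fun i hi _ => hnn i hi)
      have h2 : ∑ s ∈ S.erase m, wt s + wt m = ∑ s ∈ S, wt s :=
        Finset.sum_erase_add S wt hmS
      linarith
  · -- number of colors
    have himg : (Finset.univ.filter (fun t => isIns t = true)).image c
        ⊆ Finset.range (n0 + N1 + N2 + N3) := by
      intro γ hγ
      rw [Finset.mem_image] at hγ
      obtain ⟨t, ht, rfl⟩ := hγ
      rw [Finset.mem_filter] at ht
      exact dwecPool_subset (hgood t ht.2).1
    have h1 := Finset.card_le_card himg
    rw [Finset.card_range] at h1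
    have h2 : (((Finset.univ.filter (fun t => isIns t = true)).image c).card : ℝ)
        ≤ ((n0 + N1 + N2 + N3 : ℕ) : ℝ) := by exact_mod_cast h1
    have h3 : ((n0 + N1 + N2 + N3 : ℕ) : ℝ)
        = 2 * (Dbar : ℝ) + (N1 : ℝ) + (N2 : ℝ) + (N3 : ℝ) := by
      push_cast [hn0]
      ring
    rw [h3, hceil1, hceil2, hceil3] at h2
    exact h2
end

section
/- Let d ≥ 2 and n ≥ 1 be integers and let a, b be d-ary strings of length n. Let S be a finite set of pairs (u,v) of d-ary strings of length n such that: (i) u ≠ a and v ≠ b for every (u,v) ∈ S; (ii) distinct elements of S have distinct first components and distinct second components; and (iii) every (u,v) ∈ S satisfies suf(u_{1..n−1}, a_{1..n−1}) + pre(v_{1..n−1}, b_{1..n−1}) ≥ n. Then |S| ≤ d^{⌈n/2⌉−1} + d^{⌊n/2⌋} − 2. -/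
open Finset

theorem card_lt_of_eqOn {ι α : Type*} [Fintype ι] [DecidableEq ι] [Fintype α]
    [DecidableEq α] (K : Finset ι) (a : ι → α) (U : Finset (ι → α))
    (hU : ∀ u ∈ U, u ≠ a ∧ Set.EqOn u a K) :
    U.card < Fintype.card α ^ (Fintype.card ι - K.card) := by
  have hinj : Set.InjOn (fun (u : ι → α) (i : ↥Kᶜ) => u i) ↑(insert a U) := by
    have hagree : ∀ u ∈ insert a U, Set.EqOn u a K := by
      simp only [mem_insert, forall_eq_or_imp]
      exact ⟨Set.eqOn_refl a _, fun u hu => (hU u hu).2⟩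
    intro u hu v hv huv
    funext i
    by_cases hi : i ∈ K
    · rw [hagree u hu hi, hagree v hv hi]
    · exact congrFun huv ⟨i, mem_compl.2 hi⟩
  have hcard := card_le_card_of_injOn _ (fun _ _ => mem_coe.2 (mem_univ _)) hinj
  rwa [card_insert_of_notMem fun ha => (hU a ha).1 rfl, card_univ, Fintype.card_fun,
    Fintype.card_coe, card_compl, Nat.add_one_le_iff] at hcard

theorem strSuf_le (d n : ℕ) (s s' : Fin n → Fin d) : strSuf d n s s' ≤ n - 1 :=
  Finset.sup_le fun q hq => by
    simp only [mem_filter, mem_range] at hq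
    simp only [id]
    omega

theorem strPre_le (d n : ℕ) (s s' : Fin n → Fin d) : strPre d n s s' ≤ n - 1 :=
  Finset.sup_le fun p hp => by
    simp only [mem_filter, mem_range] at hp
    simp only [id]
    omega

theorem eq_of_le_strSuf {d n q : ℕ} {s s' : Fin n → Fin d} (h : q ≤ strSuf d n s s')
    (i : Fin n) (hi₁ : n - 1 - q ≤ i) (hi₂ : (i : ℕ) < n - 1) : s i = s' i := by
  rcases q.eq_zero_or_pos with rfl | hq
  · omega
  obtain ⟨r, hr, hqr⟩ := (Finset.le_sup_iff hq).1 h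
  exact (mem_filter.1 hr).2 i (by simp only [id] at hqr; omega) hi₂

theorem eq_of_le_strPre {d n p : ℕ} {s s' : Fin n → Fin d} (h : p ≤ strPre d n s s')
    (i : Fin n) (hi : (i : ℕ) < p) : s i = s' i := by
  obtain ⟨r, hr, hpr⟩ := (Finset.le_sup_iff ((Nat.zero_le i).trans_lt hi)).1 h
  exact (mem_filter.1 hr).2 i (by simp only [id] at hpr; omega)

theorem card_lt_of_le_strSuf {d n : ℕ} (q : ℕ) (a : Fin n → Fin d)
    (U : Finset (Fin n → Fin d)) (hU : ∀ u ∈ U, u ≠ a ∧ q ≤ strSuf d n u a) :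
    U.card < d ^ (n - q) := by
  by_cases hq : q ≤ n - 1
  · have hK : ∀ m ∈ Ico (n - 1 - q) (n - 1), m < n := fun m hm => by
      rw [mem_Ico] at hm; omega
    have hlt := card_lt_of_eqOn ((Ico (n - 1 - q) (n - 1)).attachFin hK) a U
      fun u hu => ⟨(hU u hu).1, fun i hi => by
        rw [coe_attachFin, Set.mem_preimage, mem_coe, mem_Ico] at hi
        exact eq_of_le_strSuf (hU u hu).2 i hi.1 hi.2⟩
    rwa [card_attachFin, Nat.card_Ico, Fintype.card_fin, Fintype.card_fin,
      show n - (n - 1 - (n - 1 - q)) = n - q by omega] at hlt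
  · have hU : U = ∅ := eq_empty_of_forall_notMem fun u hu =>
      hq (((hU u hu).2).trans (strSuf_le d n u a))
    simp [hU, show n - q = 0 by omega]

theorem card_lt_of_le_strPre {d n : ℕ} (p : ℕ) (b : Fin n → Fin d)
    (V : Finset (Fin n → Fin d)) (hV : ∀ v ∈ V, v ≠ b ∧ p ≤ strPre d n v b) :
    V.card < d ^ (n - p) := by
  by_cases hp : p ≤ n - 1
  · have hK : ∀ m ∈ range p, m < n := fun m hm => by
      rw [mem_range] at hm; omega
    have hlt := card_lt_of_eqOn ((range p).attachFin hK) b V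
      fun v hv => ⟨(hV v hv).1, fun i hi => by
        rw [coe_attachFin, Set.mem_preimage, mem_coe, mem_range] at hi
        exact eq_of_le_strPre (hV v hv).2 i hi⟩
    rwa [card_attachFin, card_range, Fintype.card_fin, Fintype.card_fin] at hlt
  · have hV : V = ∅ := eq_empty_of_forall_notMem fun v hv =>
      hp (((hV v hv).2).trans (strPre_le d n v b))
    simp [hV, show n - p = 0 by omega]

theorem stmt_12_general (d n : ℕ) (a b : Fin n → Fin d)
    (S : Finset ((Fin n → Fin d) × (Fin n → Fin d)))
    (h1 : ∀ p ∈ S, p.1 ≠ a ∧ p.2 ≠ b)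
    (h2 : ∀ p ∈ S, ∀ q ∈ S, p ≠ q → p.1 ≠ q.1 ∧ p.2 ≠ q.2)
    (h3 : ∀ p ∈ S, n ≤ strSuf d n p.1 a + strPre d n p.2 b) :
    S.card ≤ d ^ ((n + 1) / 2 - 1) + d ^ (n / 2) - 2 := by
  set T₁ := S.filter fun p => n / 2 + 1 ≤ strSuf d n p.1 a
  set T₂ := S.filter fun p => (n + 1) / 2 ≤ strPre d n p.2 b
  have hcover : S.card ≤ T₁.card + T₂.card := by
    refine (card_le_card fun p hp => ?_).trans (card_union_le T₁ T₂)
    have := h3 p hp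
    simp only [T₁, T₂, mem_union, mem_filter, hp, true_and]
    omega
  have hT₁ : T₁.card < d ^ ((n + 1) / 2 - 1) := by
    have hinj : Set.InjOn Prod.fst ↑T₁ := fun p hp q hq hpq => by_contra fun hne =>
      (h2 p (mem_filter.1 hp).1 q (mem_filter.1 hq).1 hne).1 hpq
    rw [← card_image_of_injOn hinj, show (n + 1) / 2 - 1 = n - (n / 2 + 1) by omega]
    refine card_lt_of_le_strSuf _ a _ fun u hu => ?_
    obtain ⟨p, hp, rfl⟩ := mem_image.1 hu
    exact ⟨(h1 p (mem_filter.1 hp).1).1, (mem_filter.1 hp).2⟩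
  have hT₂ : T₂.card < d ^ (n / 2) := by
    have hinj : Set.InjOn Prod.snd ↑T₂ := fun p hp q hq hpq => by_contra fun hne =>
      (h2 p (mem_filter.1 hp).1 q (mem_filter.1 hq).1 hne).2 hpq
    rw [← card_image_of_injOn hinj, show n / 2 = n - (n + 1) / 2 by omega]
    refine card_lt_of_le_strPre _ b _ fun v hv => ?_
    obtain ⟨p, hp, rfl⟩ := mem_image.1 hv
    exact ⟨(h1 p (mem_filter.1 hp).1).2, (mem_filter.1 hp).2⟩
  omega

/-- Unicast SNB bound for the multilog network (Theorem 1 in Hwang 1998): a set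
`S` of pairs `(u,v)` with `u ≠ a`, `v ≠ b`, pairwise distinct first and second
components, each pair link-blocking `(a,b)`
(`suf(u_{1..n-1},a_{1..n-1}) + pre(v_{1..n-1},b_{1..n-1}) ≥ n`), has
cardinality at most `d^{⌈n/2⌉-1} + d^{⌊n/2⌋} - 2`. -/
theorem stmt_12 (d n : ℕ) (hd : 2 ≤ d) (hn : 1 ≤ n) (a b : Fin n → Fin d)
    (S : Finset ((Fin n → Fin d) × (Fin n → Fin d)))
    (h1 : ∀ p ∈ S, p.1 ≠ a ∧ p.2 ≠ b)
    (h2 : ∀ p ∈ S, ∀ q ∈ S, p ≠ q → p.1 ≠ q.1 ∧ p.2 ≠ q.2)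
    (h3 : ∀ p ∈ S, n ≤ strSuf d n p.1 a + strPre d n p.2 b) :
    S.card ≤ d ^ ((n + 1) / 2 - 1) + d ^ (n / 2) - 2 :=
  stmt_12_general d n a b S h1 h2 h3
end

section
/- Let d ≥ 2, n ≥ 2, and f be integers with 1 ≤ f ≤ d^{n−2}, and set r = ⌊log_d f⌋. Let a be a d-ary string of length n and let B be a nonempty finite set of d-ary strings of length n with |B| ≤ f. Let S be a finite set of pairs (u,v) of d-ary strings of length n such that: (i) u ≠ a and v ∉ B for every (u,v) ∈ S; (ii) distinct elements of S have distinct first components and distinct second components; and (iii) every (u,v) ∈ S satisfies suf(u_{1..n−1}, a_{1..n−1}) + pre(v_{1..n−1}, b_{1..n−1}) ≥ n for some b ∈ B. Then |S| ≤ d^{⌊(n+r)/2⌋} + f·( d^{⌈(n−r−2)/2⌉} − 1 ) − 1. -/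
open Finset

theorem Finset.sup_id_filter_of_bot {α : Type*} [LinearOrder α] [OrderBot α] (s : Finset α)
    {P : α → Prop} [DecidablePred P] (hbot : P ⊥) : P ((s.filter P).sup id) :=
  sup_induction hbot (fun a ha b hb => by rcases max_choice a b with h | h <;> rwa [h])
    fun _ hb => (mem_filter.1 hb).2

theorem strPre_spec {d n : ℕ} (s s' : Fin n → Fin d) (i : Fin n)
    (hi : (i : ℕ) < strPre d n s s') : s i = s' i :=
  (range n).sup_id_filter_of_bot (P := fun p => ∀ i : Fin n, (i : ℕ) < p → s i = s' i)
    (fun _ h => absurd h (Nat.not_lt_zero _)) i hi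

theorem strSuf_spec {d n : ℕ} (s s' : Fin n → Fin d) (i : Fin n)
    (hi₁ : n - 1 - strSuf d n s s' ≤ (i : ℕ)) (hi₂ : (i : ℕ) < n - 1) : s i = s' i :=
  (range n).sup_id_filter_of_bot
    (P := fun q => ∀ i : Fin n, n - 1 - q ≤ (i : ℕ) → (i : ℕ) < n - 1 → s i = s' i)
    (fun i (h₁ : n - 1 - 0 ≤ (i : ℕ)) h₂ => absurd h₂ (by omega)) i hi₁ hi₂

theorem card_filter_ne_eqOn_le {ι α : Type*} [Fintype ι] [DecidableEq ι] [Fintype α]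
    [DecidableEq α] (I : Finset ι) (b : ι → α) :
    #{v : ι → α | v ≠ b ∧ ∀ i ∈ I, v i = b i} ≤ Fintype.card α ^ (Fintype.card ι - #I) - 1 := by
  let restrict : (ι → α) → (↥Iᶜ → α) := fun v j => v j
  have hinj : Set.InjOn restrict {v | ∀ i ∈ I, v i = b i} := by
    intro v hv w hw h
    funext i
    by_cases hi : i ∈ I
    · rw [hv i hi, hw i hi]
    · exact congrFun h ⟨i, mem_compl.2 hi⟩
  calc #{v : ι → α | v ≠ b ∧ ∀ i ∈ I, v i = b i}
      ≤ #(univ.erase (restrict b)) := by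
        refine card_le_card_of_injOn restrict (fun v hv => ?_) (hinj.mono fun v hv => ?_)
        · simp only [coe_filter, mem_univ, true_and] at hv
          exact mem_erase.2 ⟨fun h => hv.1 (hinj hv.2 (fun _ _ => rfl) h), mem_univ _⟩
        · simp only [coe_filter, mem_univ, true_and] at hv
          exact hv.2
    _ = Fintype.card α ^ (Fintype.card ι - #I) - 1 := by
        rw [card_erase_of_mem (mem_univ _), card_univ, Fintype.card_fun, Fintype.card_coe,
          card_compl]

theorem card_filter_ne_le_strPre_le {d n p : ℕ} (hp : p ≤ n) (b : Fin n → Fin d) :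
    #{v : Fin n → Fin d | v ≠ b ∧ p ≤ strPre d n v b} ≤ d ^ (n - p) - 1 := by
  have hwindow : #{i : Fin n | (i : ℕ) < p} = p := by
    rw [Fin.card_filter_val_lt, min_eq_right hp]
  calc #{v : Fin n → Fin d | v ≠ b ∧ p ≤ strPre d n v b}
      ≤ #{v : Fin n → Fin d | v ≠ b ∧ ∀ i ∈ ({i : Fin n | (i : ℕ) < p} : Finset _), v i = b i} :=
        card_le_card <| monotone_filter_right _ fun v _ ⟨hne, hv⟩ =>
          ⟨hne, fun i hi => strPre_spec v b i (by simp only [mem_filter] at hi; omega)⟩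
    _ ≤ Fintype.card (Fin d) ^ (Fintype.card (Fin n) - #{i : Fin n | (i : ℕ) < p}) - 1 := by
        convert card_filter_ne_eqOn_le _ b
    _ = d ^ (n - p) - 1 := by rw [Fintype.card_fin, Fintype.card_fin, hwindow]

theorem card_filter_ne_le_strSuf_le {d n q : ℕ} (hq : q ≤ n - 1) (a : Fin n → Fin d) :
    #{u : Fin n → Fin d | u ≠ a ∧ q ≤ strSuf d n u a} ≤ d ^ (n - q) - 1 := by
  let window : Finset (Fin n) := {i | n - 1 - q ≤ (i : ℕ) ∧ (i : ℕ) < n - 1}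
  have hwindow : #window = q := by
    have hval : window.map Fin.valEmbedding = Ico (n - 1 - q) (n - 1) := by
      ext x
      simp only [window, mem_map, mem_filter, mem_univ, true_and, Fin.valEmbedding_apply,
        mem_Ico]
      exact ⟨fun ⟨i, hi, hix⟩ => hix ▸ hi, fun hx => ⟨⟨x, by omega⟩, hx, rfl⟩⟩
    rw [← card_map, hval, Nat.card_Ico]
    omega
  calc #{u : Fin n → Fin d | u ≠ a ∧ q ≤ strSuf d n u a}
      ≤ #{u : Fin n → Fin d | u ≠ a ∧ ∀ i ∈ window, u i = a i} :=
        card_le_card <| monotone_filter_right _ fun u _ ⟨hne, hu⟩ =>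
          ⟨hne, fun i hi => by
            simp only [window, mem_filter, mem_univ, true_and] at hi
            exact strSuf_spec u a i (by omega) hi.2⟩
    _ ≤ Fintype.card (Fin d) ^ (Fintype.card (Fin n) - #window) - 1 := by
        convert card_filter_ne_eqOn_le window a
    _ = d ^ (n - q) - 1 := by rw [Fintype.card_fin, Fintype.card_fin, hwindow]

theorem card_le_of_forall_le_strSuf {d n q : ℕ} (hq : q ≤ n - 1) {a : Fin n → Fin d}
    {S : Finset ((Fin n → Fin d) × (Fin n → Fin d))}
    (hfst : Set.InjOn Prod.fst (S : Set ((Fin n → Fin d) × (Fin n → Fin d))))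
    (hS : ∀ x ∈ S, x.1 ≠ a ∧ q ≤ strSuf d n x.1 a) :
    #S ≤ d ^ (n - q) - 1 :=
  (card_le_card_of_injOn Prod.fst (fun x hx => mem_filter.2 ⟨mem_univ _, hS x hx⟩) hfst).trans
    (card_filter_ne_le_strSuf_le hq a)

theorem card_le_of_forall_le_strPre {d n p : ℕ} (hp : p ≤ n) {B : Finset (Fin n → Fin d)}
    {S : Finset ((Fin n → Fin d) × (Fin n → Fin d))}
    (hsnd : Set.InjOn Prod.snd (S : Set ((Fin n → Fin d) × (Fin n → Fin d))))
    (hS : ∀ x ∈ S, ∃ b ∈ B, x.2 ≠ b ∧ p ≤ strPre d n x.2 b) :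
    #S ≤ #B * (d ^ (n - p) - 1) :=
  calc #S ≤ #(B.biUnion fun b => {v : Fin n → Fin d | v ≠ b ∧ p ≤ strPre d n v b}) :=
        card_le_card_of_injOn Prod.snd (fun x hx =>
          let ⟨b, hb, hxb⟩ := hS x hx
          mem_biUnion.2 ⟨b, hb, mem_filter.2 ⟨mem_univ _, hxb⟩⟩) hsnd
    _ ≤ #B * (d ^ (n - p) - 1) :=
        card_biUnion_le_card_mul _ _ _ fun b _ => card_filter_ne_le_strPre_le hp b

theorem stmt_14_general (d n f : ℕ) (hd : 2 ≤ d) (hn : 2 ≤ n)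
    (hf2 : f ≤ d ^ (n - 2)) (a : Fin n → Fin d)
    (B : Finset (Fin n → Fin d)) (hBf : B.card ≤ f)
    (S : Finset ((Fin n → Fin d) × (Fin n → Fin d)))
    (h1 : ∀ p ∈ S, p.1 ≠ a ∧ p.2 ∉ B)
    (h2 : ∀ p ∈ S, ∀ q ∈ S, p ≠ q → p.1 ≠ q.1 ∧ p.2 ≠ q.2)
    (h3 : ∀ p ∈ S, ∃ b ∈ B, n ≤ strSuf d n p.1 a + strPre d n p.2 b) :
    S.card ≤ d ^ ((n + Nat.log d f) / 2)
        + f * (d ^ ((n - Nat.log d f - 1) / 2) - 1) - 1 := by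
  set r := Nat.log d f
  have hr : r ≤ n - 2 := by simpa only [Nat.log_pow hd] using Nat.log_mono_right (b := d) hf2
  set k := (n + r) / 2
  set m := (n - r - 1) / 2
  have hkm : k + m = n - 1 := by omega
  have hfst : Set.InjOn Prod.fst S := fun p hp q hq h =>
    by_contra fun hpq => (h2 p hp q hq hpq).1 h
  have hsnd : Set.InjOn Prod.snd S := fun p hp q hq h =>
    by_contra fun hpq => (h2 p hp q hq hpq).2 h
  have hlong : #{p ∈ S | m + 1 ≤ strSuf d n p.1 a} ≤ d ^ (n - (m + 1)) - 1 :=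
    card_le_of_forall_le_strSuf (by omega) (hfst.mono (filter_subset _ _)) fun p hp =>
      ⟨(h1 p (mem_filter.1 hp).1).1, (mem_filter.1 hp).2⟩
  have hshort : #{p ∈ S | ¬ m + 1 ≤ strSuf d n p.1 a} ≤ #B * (d ^ (n - (k + 1)) - 1) := by
    refine card_le_of_forall_le_strPre (by omega) (hsnd.mono (filter_subset _ _)) fun p hp => ?_
    obtain ⟨hpS, hsuf⟩ := mem_filter.1 hp
    obtain ⟨b, hb, hlink⟩ := h3 p hpS
    exact ⟨b, hb, fun hpb => (h1 p hpS).2 (hpb ▸ hb), by omega⟩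
  rw [show n - (m + 1) = k by omega] at hlong
  rw [show n - (k + 1) = m by omega] at hshort
  have hsplit := card_filter_add_card_filter_not (s := S) (fun p => m + 1 ≤ strSuf d n p.1 a)
  have hBm := Nat.mul_le_mul_right (d ^ m - 1) hBf
  have hdk : 1 ≤ d ^ k := Nat.one_le_pow _ _ (by omega)
  omega

/-- f-cast SNB bound for the window algorithm with `t = n` (Theorem III.2 in
Wang et al., ICC 2008), case `f ≤ d^{n-2}`, with `r = ⌊log_d f⌋`: a set `S` of
pairs link-blocking the multicast request `(a, B)` (`|B| ≤ f`), with pairwise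
distinct first and second components, has cardinality at most
`d^{⌊(n+r)/2⌋} + f (d^{⌈(n-r-2)/2⌉} - 1) - 1`
(here `⌈(n-r-2)/2⌉ = (n - r - 1)/2` in natural-number arithmetic). -/
theorem stmt_14 (d n f : ℕ) (hd : 2 ≤ d) (hn : 2 ≤ n)
    (hf1 : 1 ≤ f) (hf2 : f ≤ d ^ (n - 2)) (a : Fin n → Fin d)
    (B : Finset (Fin n → Fin d)) (hBne : B.Nonempty) (hBf : B.card ≤ f)
    (S : Finset ((Fin n → Fin d) × (Fin n → Fin d)))
    (h1 : ∀ p ∈ S, p.1 ≠ a ∧ p.2 ∉ B)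
    (h2 : ∀ p ∈ S, ∀ q ∈ S, p ≠ q → p.1 ≠ q.1 ∧ p.2 ≠ q.2)
    (h3 : ∀ p ∈ S, ∃ b ∈ B, n ≤ strSuf d n p.1 a + strPre d n p.2 b) :
    S.card ≤ d ^ ((n + Nat.log d f) / 2)
        + f * (d ^ ((n - Nat.log d f - 1) / 2) - 1) - 1 :=
  stmt_14_general d n f hd hn hf2 a B hBf S h1 h2 h3
end

section
/- Let d ≥ 2 and n ≥ 1 be integers. Let a be a d-ary string of length n and let B be a nonempty finite set of d-ary strings of length n. Let S be a finite set of pairs (u,v) of d-ary strings of length n such that: (i) u ≠ a and v ∉ B for every (u,v) ∈ S; (ii) distinct elements of S have distinct first components; and (iii) every (u,v) ∈ S satisfies suf(u_{1..n−1}, a_{1..n−1}) + pre(v_{1..n−1}, b_{1..n−1}) ≥ n for some b ∈ B. Then |S| ≤ d^{n−1} − 1. -/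
/-- Second part of Theorem III.2 in Wang et al. (ICC 2008): a set `S` of pairs
link-blocking the multicast request `(a, B)`, with pairwise distinct first
components, has cardinality at most `d^{n-1} - 1`. -/
theorem stmt_15 (d n : ℕ) (hd : 2 ≤ d) (hn : 1 ≤ n) (a : Fin n → Fin d)
    (B : Finset (Fin n → Fin d)) (hBne : B.Nonempty)
    (S : Finset ((Fin n → Fin d) × (Fin n → Fin d)))
    (h1 : ∀ p ∈ S, p.1 ≠ a ∧ p.2 ∉ B)
    (h2 : ∀ p ∈ S, ∀ q ∈ S, p ≠ q → p.1 ≠ q.1)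
    (h3 : ∀ p ∈ S, ∃ b ∈ B, n ≤ strSuf d n p.1 a + strPre d n p.2 b) :
    S.card ≤ d ^ (n - 1) - 1 := by
  -- bounds on strPre/strSuf
  have hpre : ∀ (s s' : Fin n → Fin d), strPre d n s s' ≤ n - 1 := by
    intro s s'
    apply Finset.sup_le
    intro p hp
    simp only [Finset.mem_filter, Finset.mem_range] at hp
    simp only [id]
    omega
  -- n = 1 case
  rcases eq_or_lt_of_le hn with h1n | h2n
  · -- n = 1: S empty
    have : S = ∅ := by
      by_contra hne
      obtain ⟨p, hp⟩ := Finset.nonempty_of_ne_empty hne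
      obtain ⟨b, _, hb⟩ := h3 p hp
      have hs : strSuf d n p.1 a ≤ n - 1 := by
        apply Finset.sup_le
        intro q hq
        simp only [Finset.mem_filter, Finset.mem_range] at hq
        simp only [id]
        omega
      have := hpre p.2 b
      omega
    simp [this]
  -- n ≥ 2
  have hn2 : 2 ≤ n := h2n
  set i₀ : Fin n := ⟨n - 2, by omega⟩ with hi₀
  -- key: every p ∈ S satisfies p.1 i₀ = a i₀
  have key : ∀ p ∈ S, p.1 i₀ = a i₀ := by
    intro p hp
    obtain ⟨b, _, hb⟩ := h3 p hp
    have hsuf1 : 1 ≤ strSuf d n p.1 a := by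
      have := hpre p.2 b
      omega
    -- extract a member q ≥ 1 of the suffix filter
    by_contra hcon
    have hall : ∀ q ∈ (Finset.range n).filter
        (fun q => ∀ i : Fin n, n - 1 - q ≤ (i : ℕ) → (i : ℕ) < n - 1 → p.1 i = a i),
        id q ≤ 0 := by
      intro q hq
      simp only [Finset.mem_filter, Finset.mem_range] at hq
      by_contra hq1
      simp only [id] at hq1
      have hv : (i₀ : ℕ) = n - 2 := rfl
      exact hcon (hq.2 i₀ (by rw [hv]; omega) (by rw [hv]; omega))
    have := Finset.sup_le hall
    rw [← strSuf] at this
    omega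
  -- injection into functions on {j // j ≠ i₀} avoiding the restriction of a
  classical
  let f : ((Fin n → Fin d) × (Fin n → Fin d)) → ({j : Fin n // j ≠ i₀} → Fin d) :=
    fun p j => p.1 j.1
  have hinj : Set.InjOn f S := by
    intro p hp q hq hfq
    by_contra hne
    apply h2 p hp q hq hne
    funext i
    by_cases hi : i = i₀
    · rw [hi, key p hp, key q hq]
    · exact congrFun hfq ⟨i, hi⟩
  have himg : S.image f ⊆ Finset.univ \ {fun j : {j : Fin n // j ≠ i₀} => a j.1} := by
    intro g hg
    simp only [Finset.mem_image] at hg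
    obtain ⟨p, hp, rfl⟩ := hg
    simp only [Finset.mem_sdiff, Finset.mem_univ, Finset.mem_singleton, true_and]
    intro heq
    apply (h1 p hp).1
    funext i
    by_cases hi : i = i₀
    · rw [hi, key p hp]
    · exact congrFun heq ⟨i, hi⟩
  have hcard1 : S.card = (S.image f).card :=
    (Finset.card_image_of_injOn hinj).symm
  have hcard2 : (S.image f).card ≤ Fintype.card ({j : Fin n // j ≠ i₀} → Fin d) - 1 := by
    calc (S.image f).card ≤ (Finset.univ \ {fun j : {j : Fin n // j ≠ i₀} => a j.1}).card :=
          Finset.card_le_card himg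
      _ = Fintype.card ({j : Fin n // j ≠ i₀} → Fin d) - 1 := by
          rw [Finset.card_sdiff_of_subset (by simp), Finset.card_singleton, Finset.card_univ]
  have hcard3 : Fintype.card ({j : Fin n // j ≠ i₀} → Fin d) = d ^ (n - 1) := by
    rw [Fintype.card_fun, Fintype.card_fin]
    congr 1
    have : Fintype.card {j : Fin n // j ≠ i₀} = Fintype.card (Fin n) - Fintype.card {j : Fin n // j = i₀} := by
      simpa using Fintype.card_subtype_compl (fun j : Fin n => j = i₀)
    rw [this, Fintype.card_subtype_eq, Fintype.card_fin]
  omega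
end

section
/- Let d ≥ 2, n ≥ 2, and f be integers with 1 ≤ f ≤ d^{n−2}·(d−1), and set r = ⌊log_d f⌋. Let a be a d-ary string of length n and let B be a nonempty finite set of d-ary strings of length n with |B| ≤ f. Let S be a finite set of pairs (u,v) of d-ary strings of length n such that: (i) u ≠ a and v ∉ B for every (u,v) ∈ S; (ii) distinct elements of S have distinct first components and distinct second components; and (iii) every (u,v) ∈ S satisfies suf(u_{1..n−1}, a_{1..n−1}) + pre(v_{1..n−1}, b_{1..n−1}) ≥ n−1 for some b ∈ B. Then |S| ≤ d^{⌊(n+r+1)/2⌋} + f·( d^{⌈(n−r−1)/2⌉} − 1 ) − 1. -/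
lemma strSuf_spec_s16 (d n t : ℕ) (u a : Fin n → Fin d) (h : t ≤ strSuf d n u a) :
    ∀ i : Fin n, n - 1 - t ≤ (i : ℕ) → (i : ℕ) < n - 1 → u i = a i := by
  rcases Nat.eq_zero_or_pos t with ht | ht
  · subst ht; intro i h1 h2; omega
  · have hne : (((Finset.range n).filter
        (fun q => ∀ i : Fin n, n - 1 - q ≤ (i : ℕ) → (i : ℕ) < n - 1 → u i = a i))).Nonempty := by
      by_contra hc
      rw [Finset.not_nonempty_iff_eq_empty] at hc
      rw [strSuf, hc] at h
      simp at h; omega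
    obtain ⟨q, hq, hq2⟩ := Finset.exists_mem_eq_sup _ hne id
    rw [strSuf, hq2] at h
    simp only [Finset.mem_filter] at hq
    intro i h1 h2
    exact hq.2 i (by simp only [id] at h; omega) h2

lemma strPre_spec_s16 (d n p : ℕ) (v b : Fin n → Fin d) (hp : 1 ≤ p) (h : p ≤ strPre d n v b) :
    ∀ i : Fin n, (i : ℕ) < p → v i = b i := by
  have hne : (((Finset.range n).filter
      (fun q => ∀ i : Fin n, (i : ℕ) < q → v i = b i))).Nonempty := by
    by_contra hc
    rw [Finset.not_nonempty_iff_eq_empty] at hc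
    rw [strPre, hc] at h
    simp at h; omega
  obtain ⟨q, hq, hq2⟩ := Finset.exists_mem_eq_sup _ hne id
  rw [strPre, hq2] at h
  simp only [Finset.mem_filter] at hq
  intro i h1
  exact hq.2 i (by simp only [id] at h; omega)

/-- Counting the "suffix cylinder". -/
lemma card_suf_cyl (d n t : ℕ) (hn : 1 ≤ n) (ht : t ≤ n - 1) (a : Fin n → Fin d) :
    (Finset.univ.filter (fun u : Fin n → Fin d =>
      ∀ i : Fin n, n - 1 - t ≤ (i : ℕ) → (i : ℕ) < n - 1 → u i = a i)).card ≤ d ^ (n - t) := by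
  have hcards : Fintype.card ((Fin (n - 1 - t) → Fin d) × Fin d) = d ^ (n - t) := by
    rw [Fintype.card_prod, Fintype.card_fun, Fintype.card_fin, Fintype.card_fin, ← pow_succ]
    congr 1
    omega
  rw [← hcards]
  have key : (Finset.univ.filter (fun u : Fin n → Fin d =>
      ∀ i : Fin n, n - 1 - t ≤ (i : ℕ) → (i : ℕ) < n - 1 → u i = a i)).card
      ≤ Fintype.card ((Fin (n - 1 - t) → Fin d) × Fin d) := by
    apply Finset.card_le_card_of_injOn
      (fun u => (fun j : Fin (n - 1 - t) => u ⟨j, by omega⟩, u ⟨n - 1, by omega⟩))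
    · intro u _; exact Finset.mem_univ _
    · intro u hu u' hu' heq
      simp only [Finset.mem_coe, Finset.mem_filter] at hu hu'
      have he1 : (fun j : Fin (n - 1 - t) => u ⟨j, by omega⟩) =
          (fun j : Fin (n - 1 - t) => u' ⟨j, by omega⟩) := congrArg Prod.fst heq
      have he2 : u ⟨n - 1, by omega⟩ = u' ⟨n - 1, by omega⟩ := congrArg Prod.snd heq
      funext i
      by_cases hi1 : (i : ℕ) < n - 1 - t
      · have := congrFun he1 ⟨i, hi1⟩
        simpa using this
      · by_cases hi2 : (i : ℕ) < n - 1
        · rw [hu.2 i (by omega) hi2, hu'.2 i (by omega) hi2]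
        · have hi3 : (i : ℕ) = n - 1 := by omega
          have : i = ⟨n - 1, by omega⟩ := Fin.ext hi3
          rw [this]; exact he2
  exact key

/-- Counting the "prefix cylinder". -/
lemma card_pre_cyl (d n t : ℕ) (ht : t ≤ n) (b : Fin n → Fin d) :
    (Finset.univ.filter (fun v : Fin n → Fin d =>
      ∀ i : Fin n, (i : ℕ) < n - t → v i = b i)).card ≤ d ^ t := by
  have key : (Finset.univ.filter (fun v : Fin n → Fin d =>
      ∀ i : Fin n, (i : ℕ) < n - t → v i = b i)).card
      ≤ Fintype.card (Fin t → Fin d) := by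
    apply Finset.card_le_card_of_injOn
      (fun v => fun j : Fin t => v ⟨n - t + j, by omega⟩)
    · intro v _; exact Finset.mem_univ _
    · intro v hv v' hv' heq
      simp only [Finset.mem_coe, Finset.mem_filter] at hv hv'
      funext i
      by_cases hi : (i : ℕ) < n - t
      · rw [hv.2 i hi, hv'.2 i hi]
      · have := congrFun heq ⟨(i : ℕ) - (n - t), by omega⟩
        simp only at this
        have hmk : (⟨n - t + ((i : ℕ) - (n - t)), by omega⟩ : Fin n) = i := by
          apply Fin.ext
          show n - t + ((i : ℕ) - (n - t)) = (i : ℕ)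
          omega
        rwa [hmk] at this
  simpa using key

/-- Crosstalk-free f-cast SNB bound (Theorem III.1 in Wang et al., ICC 2008),
case `f ≤ d^{n-2}(d-1)`, with `r = ⌊log_d f⌋`: a set `S` of pairs node-blocking
the multicast request `(a, B)` (`|B| ≤ f`), with pairwise distinct first and
second components, has cardinality at most
`d^{⌊(n+r+1)/2⌋} + f (d^{⌈(n-r-1)/2⌉} - 1) - 1`
(here `⌈(n-r-1)/2⌉ = (n - r)/2` in natural-number arithmetic). -/
theorem stmt_16 (d n f : ℕ) (hd : 2 ≤ d) (hn : 2 ≤ n)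
    (hf1 : 1 ≤ f) (hf2 : f ≤ d ^ (n - 2) * (d - 1)) (a : Fin n → Fin d)
    (B : Finset (Fin n → Fin d)) (hBne : B.Nonempty) (hBf : B.card ≤ f)
    (S : Finset ((Fin n → Fin d) × (Fin n → Fin d)))
    (h1 : ∀ p ∈ S, p.1 ≠ a ∧ p.2 ∉ B)
    (h2 : ∀ p ∈ S, ∀ q ∈ S, p ≠ q → p.1 ≠ q.1 ∧ p.2 ≠ q.2)
    (h3 : ∀ p ∈ S, ∃ b ∈ B, n - 1 ≤ strSuf d n p.1 a + strPre d n p.2 b) :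
    S.card ≤ d ^ ((n + Nat.log d f + 1) / 2)
        + f * (d ^ ((n - Nat.log d f) / 2) - 1) - 1 := by
  set r := Nat.log d f with hr
  -- r ≤ n - 2
  have hfd : f < d ^ (n - 1) := by
    have h1' : d ^ (n - 2) * (d - 1) < d ^ (n - 2) * d := by
      have hp : 0 < d ^ (n - 2) := pow_pos (by omega) _
      exact (Nat.mul_lt_mul_left hp).2 (by omega)
    have h2' : d ^ (n - 2) * d = d ^ (n - 1) := by
      rw [← pow_succ]; congr 1; omega
    omega
  have hrn : r < n - 1 := Nat.log_lt_of_lt_pow (by omega) hfd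
  set t := (n - r) / 2 with htdef
  have ht1 : t ≤ n - 1 := by omega
  have ht0 : 1 ≤ t := by omega
  have hexp : (n + r + 1) / 2 = n - t := by omega
  -- split S
  classical
  set S₁ := S.filter (fun p => t ≤ strSuf d n p.1 a) with hS₁
  set S₂ := S.filter (fun p => ¬ t ≤ strSuf d n p.1 a) with hS₂
  have hsplit : S₁.card + S₂.card = S.card :=
    Finset.card_filter_add_card_filter_not _
  -- bound S₁
  set A := (Finset.univ.filter (fun u : Fin n → Fin d =>
      ∀ i : Fin n, n - 1 - t ≤ (i : ℕ) → (i : ℕ) < n - 1 → u i = a i)) with hA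
  have haA : a ∈ A := by simp [hA]
  have hS1 : S₁.card ≤ d ^ (n - t) - 1 := by
    have hinj : Set.InjOn Prod.fst (S₁ : Set ((Fin n → Fin d) × (Fin n → Fin d))) := by
      intro p hp q hq hpq
      by_contra hne
      exact (h2 p (Finset.mem_of_mem_filter _ hp) q (Finset.mem_of_mem_filter _ hq) hne).1 hpq
    have himg : ∀ p ∈ S₁, p.1 ∈ A.erase a := by
      intro p hp
      rw [Finset.mem_filter] at hp
      refine Finset.mem_erase.2 ⟨(h1 p hp.1).1, ?_⟩
      simp only [hA, Finset.mem_filter, Finset.mem_univ, true_and]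
      exact strSuf_spec_s16 d n t p.1 a hp.2
    have := Finset.card_le_card_of_injOn Prod.fst himg hinj
    have hAcard : A.card ≤ d ^ (n - t) := card_suf_cyl d n t (by omega) ht1 a
    have := Finset.card_erase_of_mem haA
    omega
  -- bound S₂
  set C := fun b : Fin n → Fin d => (Finset.univ.filter (fun v : Fin n → Fin d =>
      ∀ i : Fin n, (i : ℕ) < n - t → v i = b i)) with hC
  have hS2 : S₂.card ≤ f * (d ^ t - 1) := by
    have hinj : Set.InjOn Prod.snd (S₂ : Set ((Fin n → Fin d) × (Fin n → Fin d))) := by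
      intro p hp q hq hpq
      by_contra hne
      exact (h2 p (Finset.mem_of_mem_filter _ hp) q (Finset.mem_of_mem_filter _ hq) hne).2 hpq
    have himg : ∀ p ∈ S₂, p.2 ∈ B.biUnion (fun b => C b \ B) := by
      intro p hp
      rw [Finset.mem_filter] at hp
      obtain ⟨b, hb, hb2⟩ := h3 p hp.1
      refine Finset.mem_biUnion.2 ⟨b, hb, Finset.mem_sdiff.2 ⟨?_, (h1 p hp.1).2⟩⟩
      simp only [hC, Finset.mem_filter, Finset.mem_univ, true_and]
      have hpre : n - t ≤ strPre d n p.2 b := by omega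
      exact strPre_spec_s16 d n (n - t) p.2 b (by omega) hpre
    have hcard := Finset.card_le_card_of_injOn Prod.snd himg hinj
    have hbi : (B.biUnion (fun b => C b \ B)).card ≤ B.card * (d ^ t - 1) := by
      calc (B.biUnion (fun b => C b \ B)).card ≤ ∑ b ∈ B, (C b \ B).card :=
            Finset.card_biUnion_le
        _ ≤ ∑ b ∈ B, (d ^ t - 1) := by
            apply Finset.sum_le_sum
            intro b hbB
            have hbC : b ∈ C b := by simp [hC]
            have hsub : C b \ B ⊆ (C b).erase b := by
              intro v hv
              rw [Finset.mem_sdiff] at hv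
              exact Finset.mem_erase.2 ⟨fun h => hv.2 (h ▸ hbB), hv.1⟩
            have h1' := Finset.card_le_card hsub
            have h2' := Finset.card_erase_of_mem hbC
            have h3' : (C b).card ≤ d ^ t := card_pre_cyl d n t (by omega) b
            omega
        _ = B.card * (d ^ t - 1) := by rw [Finset.sum_const, smul_eq_mul]
    calc S₂.card ≤ (B.biUnion (fun b => C b \ B)).card := hcard
      _ ≤ B.card * (d ^ t - 1) := hbi
      _ ≤ f * (d ^ t - 1) := Nat.mul_le_mul_right _ hBf
  have hdpos : 1 ≤ d ^ (n - t) := Nat.one_le_pow _ _ (by omega)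
  rw [hexp]
  omega
end

section
/- Let d ≥ 2 and n ≥ 2 be integers. Let a be a d-ary string of length n and let B be a nonempty finite set of d-ary strings of length n. Let S be a finite set of pairs (u,v) of d-ary strings of length n such that: (i) u ≠ a and v ∉ B for every (u,v) ∈ S; (ii) distinct elements of S have distinct first components and distinct second components; and (iii) every (u,v) ∈ S satisfies suf(u_{1..n−1}, a_{1..n−1}) + pre(v_{1..n−1}, b_{1..n−1}) ≥ n−1 for some b ∈ B. Then |S| ≤ d^n − d^{n−2}·(d−1) − 1. -/
/-- Auxiliary: the number of `d`-ary strings of length `n` with a prescribed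
value at one coordinate is `d ^ (n-1)`. -/
lemma card_filter_eval_eq (d n : ℕ) (j : Fin n) (c : Fin d) :
    (Finset.univ.filter fun u : Fin n → Fin d => u j = c).card = d ^ (n - 1) := by
  classical
  rw [← Fintype.card_subtype]
  have e1 : {u : Fin n → Fin d // u j = c} ≃ ({k : Fin n // k ≠ j} → Fin d) :=
    { toFun := fun u k => u.1 k.1
      invFun := fun g => ⟨fun k => if h : k = j then c else g ⟨k, h⟩, by simp⟩
      left_inv := by
        rintro ⟨u, hu⟩
        apply Subtype.ext
        funext k
        by_cases h : k = j
        · subst h; simpa using hu.symm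
        · simp [h]
      right_inv := by
        intro g
        funext k
        simp [k.2] }
  rw [Fintype.card_congr e1, Fintype.card_fun, Fintype.card_fin]
  congr 1
  have : Fintype.card {k : Fin n // k ≠ j} = Fintype.card {k : Fin n // ¬ k = j} := rfl
  rw [this, Fintype.card_subtype_compl, Fintype.card_subtype_eq, Fintype.card_fin]

lemma arith_final (A P C D x s : ℕ) (hkey : A + P + C = D) (hA : 1 ≤ A)
    (hx : x ≤ P) (hs : s ≤ A - 1 + x) : s ≤ D - C - 1 := by omega

/-- Second part of Theorem III.1 in Wang et al. (ICC 2008): a set `S` of pairs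
node-blocking the multicast request `(a, B)`, with pairwise distinct first and
second components, has cardinality at most `d^n - d^{n-2}(d-1) - 1`. -/
theorem stmt_17 (d n : ℕ) (hd : 2 ≤ d) (hn : 2 ≤ n) (a : Fin n → Fin d)
    (B : Finset (Fin n → Fin d)) (hBne : B.Nonempty)
    (S : Finset ((Fin n → Fin d) × (Fin n → Fin d)))
    (h1 : ∀ p ∈ S, p.1 ≠ a ∧ p.2 ∉ B)
    (h2 : ∀ p ∈ S, ∀ q ∈ S, p ≠ q → p.1 ≠ q.1 ∧ p.2 ≠ q.2)
    (h3 : ∀ p ∈ S, ∃ b ∈ B, n - 1 ≤ strSuf d n p.1 a + strPre d n p.2 b) :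
    S.card ≤ d ^ n - d ^ (n - 2) * (d - 1) - 1 := by
  classical
  obtain ⟨m, rfl⟩ : ∃ m, n = m + 2 := ⟨n - 2, by omega⟩
  have hm2 : m + 2 - 2 = m := by omega
  rw [hm2]
  have hcardU : (Finset.univ : Finset (Fin (m + 2) → Fin d)).card = d ^ (m + 2) := by
    simp [Finset.card_univ, Fintype.card_fun]
  have hsndInj : Set.InjOn Prod.snd (S : Set ((Fin (m + 2) → Fin d) × (Fin (m + 2) → Fin d))) := by
    intro p hp q hq h
    by_contra hne
    exact (h2 p hp q hq hne).2 h
  have hfstInj : Set.InjOn Prod.fst (S : Set ((Fin (m + 2) → Fin d) × (Fin (m + 2) → Fin d))) := by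
    intro p hp q hq h
    by_contra hne
    exact (h2 p hp q hq hne).1 h
  by_cases hB : d ^ m * (d - 1) + 1 ≤ B.card
  · -- big B: second components are distinct and avoid B
    have hsub : S.image Prod.snd ⊆ Finset.univ \ B := by
      intro v hv
      obtain ⟨p, hp, rfl⟩ := Finset.mem_image.mp hv
      exact Finset.mem_sdiff.mpr ⟨Finset.mem_univ _, (h1 p hp).2⟩
    have h4 : S.card ≤ d ^ (m + 2) - B.card := by
      calc S.card = (S.image Prod.snd).card := (Finset.card_image_of_injOn hsndInj).symm
        _ ≤ (Finset.univ \ B).card := Finset.card_le_card hsub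
        _ = d ^ (m + 2) - B.card := by
            rw [Finset.card_sdiff_of_subset (Finset.subset_univ B), hcardU]
    omega
  · -- small B
    push_neg at hB
    have hBle : B.card ≤ d ^ m * (d - 1) := by omega
    have hj : m < m + 2 := by omega
    have hl : m + 1 < m + 2 := by omega
    set j : Fin (m + 2) := ⟨m, hj⟩ with hjdef
    set l : Fin (m + 2) := ⟨m + 1, hl⟩ with hldef
    set S₁ := S.filter (fun p => p.1 j = a j) with hS1def
    set S₂ := S.filter (fun p => ¬ p.1 j = a j) with hS2def
    have hsplit : S₁.card + S₂.card = S.card :=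
      Finset.card_filter_add_card_filter_not _
    -- bound on S₁
    have hS1card : S₁.card ≤ d ^ (m + 1) - 1 := by
      have hsub1 : S₁.image Prod.fst ⊆
          (Finset.univ.filter fun u : Fin (m + 2) → Fin d => u j = a j).erase a := by
        intro u hu
        obtain ⟨p, hp, rfl⟩ := Finset.mem_image.mp hu
        have hpS := Finset.mem_filter.mp hp
        exact Finset.mem_erase.mpr ⟨(h1 p hpS.1).1,
          Finset.mem_filter.mpr ⟨Finset.mem_univ _, hpS.2⟩⟩
      have hfix := card_filter_eval_eq d (m + 2) j (a j)
      calc S₁.card = (S₁.image Prod.fst).card :=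
            (Finset.card_image_of_injOn
              (hfstInj.mono (by exact_mod_cast Finset.filter_subset _ S))).symm
        _ ≤ _ := Finset.card_le_card hsub1
        _ = d ^ (m + 1) - 1 := by
            rw [Finset.card_erase_of_mem (by simp), hfix]
            norm_num
    -- bound on S₂
    have hinner : ∀ b : Fin (m + 2) → Fin d,
        (Finset.univ.filter fun v : Fin (m + 2) → Fin d =>
          v ≠ b ∧ ∀ i : Fin (m + 2), (i : ℕ) < m + 2 - 1 → v i = b i).card ≤ d - 1 := by
      intro b
      have hmaps : ∀ v ∈ (Finset.univ.filter fun v : Fin (m + 2) → Fin d =>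
          v ≠ b ∧ ∀ i : Fin (m + 2), (i : ℕ) < m + 2 - 1 → v i = b i),
          v l ∈ Finset.univ.erase (b l) := by
        intro v hv
        simp only [Finset.mem_filter] at hv
        refine Finset.mem_erase.mpr ⟨?_, Finset.mem_univ _⟩
        intro hvl
        apply hv.2.1
        funext i
        by_cases hi : (i : ℕ) < m + 2 - 1
        · exact hv.2.2 i hi
        · have hieq : i = l := by
            apply Fin.ext
            have := i.isLt
            show (i : ℕ) = m + 1
            omega
          rw [hieq]; exact hvl
      calc _ ≤ (Finset.univ.erase (b l)).card := by
            apply Finset.card_le_card_of_injOn _ hmaps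
            intro v hv w hw hvw
            simp only [Finset.coe_filter, Set.mem_setOf_eq] at hv hw
            funext i
            by_cases hi : (i : ℕ) < m + 2 - 1
            · rw [hv.2.2 i hi, hw.2.2 i hi]
            · have hieq : i = l := by
                apply Fin.ext
                have := i.isLt
                show (i : ℕ) = m + 1
                clear hvw hv hw
                omega
              rw [hieq]; exact hvw
        _ = d - 1 := by
            rw [Finset.card_erase_of_mem (Finset.mem_univ _)]
            simp
    have himg2 : S₂.image Prod.snd ⊆ B.biUnion (fun b =>
        Finset.univ.filter fun v : Fin (m + 2) → Fin d =>
          v ≠ b ∧ ∀ i : Fin (m + 2), (i : ℕ) < m + 2 - 1 → v i = b i) := by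
      intro v hv
      obtain ⟨p, hp, rfl⟩ := Finset.mem_image.mp hv
      have hpS := Finset.mem_filter.mp hp
      obtain ⟨b, hbB, hble⟩ := h3 p hpS.1
      have hsuf : strSuf d (m + 2) p.1 a = 0 := by
        by_contra h0
        have h1le : 1 ≤ strSuf d (m + 2) p.1 a := Nat.one_le_iff_ne_zero.mpr h0
        rw [strSuf, Finset.le_sup_iff (by norm_num : (0 : ℕ) < 1)] at h1le
        obtain ⟨q, hq, hq1⟩ := h1le
        simp only [Finset.mem_filter, Finset.mem_range, id] at hq hq1
        exact hpS.2 (hq.2 j (show m + 2 - 1 - q ≤ m by omega)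
          (show m < m + 2 - 1 by omega))
      rw [hsuf, zero_add] at hble
      have hpre : ∀ i : Fin (m + 2), (i : ℕ) < m + 2 - 1 → p.2 i = b i := by
        rw [strPre, Finset.le_sup_iff (show (0 : ℕ) < m + 2 - 1 by omega)] at hble
        obtain ⟨q, hq, hq1⟩ := hble
        simp only [Finset.mem_filter, Finset.mem_range, id] at hq hq1
        intro i hi
        exact hq.2 i (lt_of_lt_of_le hi hq1)
      refine Finset.mem_biUnion.mpr ⟨b, hbB,
        Finset.mem_filter.mpr ⟨Finset.mem_univ _, ?_, hpre⟩⟩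
      rintro rfl
      exact (h1 p hpS.1).2 hbB
    have hS2card : S₂.card ≤ B.card * (d - 1) := by
      calc S₂.card = (S₂.image Prod.snd).card :=
            (Finset.card_image_of_injOn
              (hsndInj.mono (by exact_mod_cast Finset.filter_subset _ S))).symm
        _ ≤ (B.biUnion (fun b =>
              Finset.univ.filter fun v : Fin (m + 2) → Fin d =>
                v ≠ b ∧ ∀ i : Fin (m + 2), (i : ℕ) < m + 2 - 1 → v i = b i)).card :=
            Finset.card_le_card himg2
        _ ≤ ∑ b ∈ B, (Finset.univ.filter fun v : Fin (m + 2) → Fin d =>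
              v ≠ b ∧ ∀ i : Fin (m + 2), (i : ℕ) < m + 2 - 1 → v i = b i).card :=
            Finset.card_biUnion_le
        _ ≤ ∑ _b ∈ B, (d - 1) := Finset.sum_le_sum (fun b _ => hinner b)
        _ = B.card * (d - 1) := by rw [Finset.sum_const, smul_eq_mul]
    -- arithmetic
    have hkey : d ^ (m + 1) + d ^ m * (d - 1) * (d - 1) + d ^ m * (d - 1) = d ^ (m + 2) := by
      obtain ⟨t, rfl⟩ : ∃ t, d = t + 1 := ⟨d - 1, by omega⟩
      have h1' : t + 1 - 1 = t := by omega
      rw [h1']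
      ring
    have hA1 : 1 ≤ d ^ (m + 1) := Nat.one_le_pow _ _ (by omega)
    have hmul : B.card * (d - 1) ≤ d ^ m * (d - 1) * (d - 1) :=
      Nat.mul_le_mul_right _ hBle
    exact arith_final (d ^ (m + 1)) (d ^ m * (d - 1) * (d - 1)) (d ^ m * (d - 1))
      (d ^ (m + 2)) (B.card * (d - 1)) S.card hkey hA1 hmul (by omega)
end
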